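/- arXiv:2509.00312 — 8 statements merged into one kernel-verified Lean document; each statement's English description precedes it below -/
import Mathlib

section
/- Let n ≥ 1, let D_1,…,D_n ∈ {0,1} with D_i = 1 for at least one i, let a_1,…,a_n ∈ ℝ^q, b_1,…,b_n ∈ ℝ^m, and let ω > 0. On the open convex set U = {(λ0,λ1,λ2) ∈ ℝ×ℝ^q×ℝ^m : λ0 + ⟨λ1,a_i⟩ + ⟨λ2,b_i⟩ > 0 for every i with D_i = 1}, define F(λ0,λ1,λ2) = (1/n)·Σ_{i=1}^n −D_i·log(λ0 + ⟨λ1,a_i⟩ + ⟨λ2,b_i⟩) + λ0 + ω‖λ2‖₁. If (λ̃0,λ̃1,λ̃2) ∈ U minimizes F over U, then the weights p_i := n^{−1}(λ̃0 + ⟨λ̃1,a_i⟩ + ⟨λ̃2,b_i⟩)^{−1}, defined for i with D_i = 1, satisfy: (i) Σ_{i: D_i=1} p_i = 1; (ii) Σ_{i: D_i=1} p_i·a_i = 0 in ℝ^q; and (iii) |Σ_{i: D_i=1} p_i·b_{ij}| ≤ ω for every coordinate j = 1,…,m. -/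
open Finset

lemma aux_deriv (n : ℕ) (D s c : Fin n → ℝ) (hD : ∀ i, D i = 0 ∨ D i = 1)
    (hs : ∀ i, D i = 1 → 0 < s i) :
    HasDerivAt (fun t => (1 / (n : ℝ)) * ∑ i, -(D i) * Real.log (s i + t * c i))
      ((1 / (n : ℝ)) * ∑ i, -(D i) * (c i / s i)) 0 := by
  apply HasDerivAt.const_mul
  apply HasDerivAt.fun_sum
  intro i _
  rcases hD i with h0 | h1
  · simpa [h0] using (hasDerivAt_const (0 : ℝ) (0 : ℝ))
  · have hsi := hs i h1
    have hu : HasDerivAt (fun t : ℝ => s i + t * c i) (c i) 0 := by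
      simpa using ((hasDerivAt_id (0 : ℝ)).mul_const (c i)).const_add (s i)
    have hlog : HasDerivAt (fun t => Real.log (s i + t * c i)) (c i / s i) 0 := by
      have := hu.log (by simpa using ne_of_gt hsi)
      simpa using this
    simpa [mul_comm] using hlog.const_mul (-(D i))

lemma aux_abs (φ : ℝ → ℝ) (L ω : ℝ) (hφ : HasDerivAt φ L 0)
    (h : ∀ᶠ t in nhds (0 : ℝ), φ 0 ≤ φ t + ω * |t|) : |L| ≤ ω := by
  rw [hasDerivAt_iff_tendsto_slope] at hφ
  rw [abs_le]
  constructor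
  · have htend : Filter.Tendsto (slope φ 0) (nhdsWithin 0 (Set.Ioi 0)) (nhds L) :=
      hφ.mono_left (nhdsWithin_mono _ (fun t ht => ne_of_gt ht))
    apply ge_of_tendsto htend
    filter_upwards [self_mem_nhdsWithin, (h.filter_mono nhdsWithin_le_nhds)] with t ht hh
    have ht0 : (0 : ℝ) < t := ht
    rw [slope_def_field, sub_zero, le_div_iff₀ ht0]
    rw [abs_of_pos ht0] at hh
    nlinarith
  · have htend : Filter.Tendsto (slope φ 0) (nhdsWithin 0 (Set.Iio 0)) (nhds L) :=
      hφ.mono_left (nhdsWithin_mono _ (fun t ht => ne_of_lt ht))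
    apply le_of_tendsto htend
    filter_upwards [self_mem_nhdsWithin, (h.filter_mono nhdsWithin_le_nhds)] with t ht hh
    have ht0 : t < (0 : ℝ) := ht
    rw [slope_def_field, sub_zero, div_le_iff_of_neg ht0]
    rw [abs_of_neg ht0] at hh
    nlinarith

/-- KKT characterization: the empirical likelihood weights obtained from the minimizer of
the regularized dual problem satisfy the sum-to-one constraint, the exact calibration
constraints for the coordinates `a i`, and the soft balancing constraints for `b i`. -/
theorem stmt_0 (n q m : ℕ) (hn : 1 ≤ n)
    (D : Fin n → ℝ) (hD : ∀ i, D i = 0 ∨ D i = 1) (hD1 : ∃ i, D i = 1)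
    (a : Fin n → Fin q → ℝ) (b : Fin n → Fin m → ℝ)
    (ω : ℝ) (hω : 0 < ω)
    (U : Set (ℝ × (Fin q → ℝ) × (Fin m → ℝ)))
    (hU : U = {l : ℝ × (Fin q → ℝ) × (Fin m → ℝ) |
      ∀ i, D i = 1 → 0 < l.1 + ∑ k, l.2.1 k * a i k + ∑ j, l.2.2 j * b i j})
    (F : ℝ × (Fin q → ℝ) × (Fin m → ℝ) → ℝ)
    (hF : ∀ l, F l = (1 / (n : ℝ)) * ∑ i, -(D i) *
        Real.log (l.1 + ∑ k, l.2.1 k * a i k + ∑ j, l.2.2 j * b i j)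
      + l.1 + ω * ∑ j, |l.2.2 j|)
    (lam : ℝ × (Fin q → ℝ) × (Fin m → ℝ)) (hlamU : lam ∈ U)
    (hmin : ∀ l ∈ U, F lam ≤ F l)
    (p : Fin n → ℝ)
    (hp : ∀ i, p i = ((n : ℝ) * (lam.1 + ∑ k, lam.2.1 k * a i k + ∑ j, lam.2.2 j * b i j))⁻¹) :
    (∑ i ∈ univ.filter (fun i => D i = 1), p i = 1) ∧
    (∀ k, ∑ i ∈ univ.filter (fun i => D i = 1), p i * a i k = 0) ∧
    (∀ j, |∑ i ∈ univ.filter (fun i => D i = 1), p i * b i j| ≤ ω) := by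
  have hn' : (n : ℝ) ≠ 0 := Nat.cast_ne_zero.mpr (by omega)
  set s : Fin n → ℝ :=
    fun i => lam.1 + ∑ k, lam.2.1 k * a i k + ∑ j, lam.2.2 j * b i j with hsdef
  have hs : ∀ i, D i = 1 → 0 < s i := by rw [hU] at hlamU; exact hlamU
  have hp' : ∀ i, p i = ((n : ℝ) * s i)⁻¹ := hp
  -- eventually in U along a direction
  have hev : ∀ (c : Fin n → ℝ), ∀ᶠ t in nhds (0 : ℝ), ∀ i, D i = 1 → 0 < s i + t * c i := by
    intro c
    rw [Filter.eventually_all]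
    intro i
    by_cases hDi : D i = 1
    · have hT : Filter.Tendsto (fun t : ℝ => s i + t * c i) (nhds 0) (nhds (s i)) := by
        have hc : Filter.Tendsto (fun t : ℝ => s i + t * c i) (nhds 0) (nhds (s i + 0 * c i)) :=
          (Filter.tendsto_id.mul_const (c i)).const_add (s i)
        simpa using hc
      filter_upwards [hT.eventually (eventually_gt_nhds (hs i hDi))] with t ht _
      exact ht
    · filter_upwards with t h
      exact absurd h hDi
  -- conversion of the derivative expression to the weighted sums
  have hconv : ∀ c : Fin n → ℝ,
      (1 / (n : ℝ)) * ∑ i, -(D i) * (c i / s i)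
        = -∑ i ∈ univ.filter (fun i => D i = 1), p i * c i := by
    intro c
    rw [Finset.mul_sum, Finset.sum_filter, ← Finset.sum_neg_distrib]
    apply Finset.sum_congr rfl
    intro i _
    rcases hD i with h0 | h1
    · simp [h0]
    · have hsi := (hs i h1).ne'
      rw [hp' i]
      simp only [h1, if_pos]
      field_simp
  have hlam2 : (lam.1, lam.2.1, lam.2.2) = lam := rfl
  refine ⟨?_, ?_, ?_⟩
  · -- sum to one
    set c : Fin n → ℝ := fun _ => 1 with hc
    have hFeq : ∀ t : ℝ, F (lam.1 + t, lam.2.1, lam.2.2)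
        = (1 / (n : ℝ)) * ∑ i, -(D i) * Real.log (s i + t * c i)
          + t + (lam.1 + ω * ∑ j, |lam.2.2 j|) := by
      intro t
      rw [hF]
      simp only
      have harg : ∀ i : Fin n,
          lam.1 + t + ∑ k, lam.2.1 k * a i k + ∑ j, lam.2.2 j * b i j = s i + t * c i := by
        intro i; rw [hsdef, hc]; ring
      simp only [harg]
      ring
    have hd := aux_deriv n D s c hD hs
    have hder : HasDerivAt (fun t => (1 / (n : ℝ)) * ∑ i, -(D i) * Real.log (s i + t * c i) + t)
        ((1 / (n : ℝ)) * ∑ i, -(D i) * (c i / s i) + 1) 0 := hd.add (hasDerivAt_id 0)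
    have hlm : IsLocalMin
        (fun t => (1 / (n : ℝ)) * ∑ i, -(D i) * Real.log (s i + t * c i) + t) 0 := by
      have : ∀ᶠ t in nhds (0 : ℝ),
          (1 / (n : ℝ)) * ∑ i, -(D i) * Real.log (s i + 0 * c i) + 0
            ≤ (1 / (n : ℝ)) * ∑ i, -(D i) * Real.log (s i + t * c i) + t := by
        filter_upwards [hev c] with t ht
        have hmem : (lam.1 + t, lam.2.1, lam.2.2) ∈ U := by
          rw [hU]
          intro i hDi
          have h2 := ht i hDi
          rw [hsdef, hc] at h2
          simp only at h2 ⊢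
          linarith
        have h3 := hmin _ hmem
        rw [hFeq t] at h3
        have h4 : F lam = (1 / (n : ℝ)) * ∑ i, -(D i) * Real.log (s i + 0 * c i)
            + 0 + (lam.1 + ω * ∑ j, |lam.2.2 j|) := by
          rw [← hlam2]
          have := hFeq 0
          simpa using this
        rw [h4] at h3
        linarith
      exact this
    have h0 := hlm.hasDerivAt_eq_zero hder
    rw [hconv c] at h0
    have : ∑ i ∈ univ.filter (fun i => D i = 1), p i * c i = 1 := by linarith
    simpa [hc] using this
  · -- calibration in a
    intro k
    set c : Fin n → ℝ := fun i => a i k with hc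
    have hsum2 : ∀ (i : Fin n) (t : ℝ),
        ∑ k', (lam.2.1 k' + t * (if k' = k then 1 else 0)) * a i k'
          = (∑ k', lam.2.1 k' * a i k') + t * a i k := by
      intro i t
      simp [add_mul, Finset.sum_add_distrib, mul_ite, ite_mul, mul_assoc]
    have hFeq : ∀ t : ℝ,
        F (lam.1, fun k' => lam.2.1 k' + t * (if k' = k then 1 else 0), lam.2.2)
        = (1 / (n : ℝ)) * ∑ i, -(D i) * Real.log (s i + t * c i)
          + (lam.1 + ω * ∑ j, |lam.2.2 j|) := by
      intro t
      rw [hF]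
      simp only [hsum2]
      have harg : ∀ i : Fin n,
          lam.1 + ((∑ k', lam.2.1 k' * a i k') + t * a i k) + ∑ j, lam.2.2 j * b i j
            = s i + t * c i := by
        intro i; rw [hsdef, hc]; ring
      simp only [harg]
      ring
    have hd := aux_deriv n D s c hD hs
    have hlm : IsLocalMin
        (fun t => (1 / (n : ℝ)) * ∑ i, -(D i) * Real.log (s i + t * c i)) 0 := by
      have : ∀ᶠ t in nhds (0 : ℝ),
          (1 / (n : ℝ)) * ∑ i, -(D i) * Real.log (s i + 0 * c i)
            ≤ (1 / (n : ℝ)) * ∑ i, -(D i) * Real.log (s i + t * c i) := by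
        filter_upwards [hev c] with t ht
        have hmem : (lam.1, fun k' => lam.2.1 k' + t * (if k' = k then 1 else 0), lam.2.2) ∈ U := by
          rw [hU]
          intro i hDi
          have h2 := ht i hDi
          rw [hsdef, hc] at h2
          simp only at h2 ⊢
          rw [hsum2]
          linarith
        have h3 := hmin _ hmem
        rw [hFeq t] at h3
        have h4 : F lam = (1 / (n : ℝ)) * ∑ i, -(D i) * Real.log (s i + 0 * c i)
            + (lam.1 + ω * ∑ j, |lam.2.2 j|) := by
          rw [← hlam2]
          have h5 := hFeq 0
          have h6 : (fun k' => lam.2.1 k' + (0:ℝ) * (if k' = k then 1 else 0)) = lam.2.1 := by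
            funext k'; simp
          rw [h6] at h5
          exact h5
        rw [h4] at h3
        linarith
      exact this
    have h0 := hlm.hasDerivAt_eq_zero hd
    rw [hconv c] at h0
    have : ∑ i ∈ univ.filter (fun i => D i = 1), p i * c i = 0 := by linarith
    simpa [hc] using this
  · -- soft balancing in b
    intro j
    set c : Fin n → ℝ := fun i => b i j with hc
    have hsum3 : ∀ (i : Fin n) (t : ℝ),
        ∑ j', (lam.2.2 j' + t * (if j' = j then 1 else 0)) * b i j'
          = (∑ j', lam.2.2 j' * b i j') + t * b i j := by
      intro i t
      simp [add_mul, Finset.sum_add_distrib, mul_ite, ite_mul, mul_assoc]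
    have hFeq : ∀ t : ℝ,
        F (lam.1, lam.2.1, fun j' => lam.2.2 j' + t * (if j' = j then 1 else 0))
        = (1 / (n : ℝ)) * ∑ i, -(D i) * Real.log (s i + t * c i)
          + lam.1 + ω * ∑ j', |lam.2.2 j' + t * (if j' = j then 1 else 0)| := by
      intro t
      rw [hF]
      simp only [hsum3]
      have harg : ∀ i : Fin n,
          lam.1 + ∑ k, lam.2.1 k * a i k + ((∑ j', lam.2.2 j' * b i j') + t * b i j)
            = s i + t * c i := by
        intro i; rw [hsdef, hc]; ring
      simp only [harg]
    have hd := aux_deriv n D s c hD hs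
    have habs : ∀ t : ℝ, ∑ j', |lam.2.2 j' + t * (if j' = j then 1 else 0)|
        ≤ (∑ j', |lam.2.2 j'|) + |t| := by
      intro t
      have h1 : ∀ j', |lam.2.2 j' + t * (if j' = j then 1 else 0)|
          ≤ |lam.2.2 j'| + (if j' = j then |t| else 0) := by
        intro j'
        by_cases h : j' = j
        · simp only [h, if_pos]
          simpa using abs_add_le (lam.2.2 j) t
        · simp [h]
      calc ∑ j', |lam.2.2 j' + t * (if j' = j then 1 else 0)|
          ≤ ∑ j', (|lam.2.2 j'| + (if j' = j then |t| else 0)) :=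
            Finset.sum_le_sum fun j' _ => h1 j'
        _ = (∑ j', |lam.2.2 j'|) + |t| := by
            rw [Finset.sum_add_distrib, Finset.sum_ite_eq' univ j (fun _ => |t|)]
            simp
    have hee : ∀ᶠ t in nhds (0 : ℝ),
        (fun u => (1 / (n : ℝ)) * ∑ i, -(D i) * Real.log (s i + u * c i)) 0
          ≤ (fun u => (1 / (n : ℝ)) * ∑ i, -(D i) * Real.log (s i + u * c i)) t + ω * |t| := by
      filter_upwards [hev c] with t ht
      have hmem : (lam.1, lam.2.1, fun j' => lam.2.2 j' + t * (if j' = j then 1 else 0)) ∈ U := by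
        rw [hU]
        intro i hDi
        have h2 := ht i hDi
        rw [hsdef, hc] at h2
        simp only at h2 ⊢
        rw [hsum3]
        linarith
      have h3 := hmin _ hmem
      rw [hFeq t] at h3
      have h4 : F lam = (1 / (n : ℝ)) * ∑ i, -(D i) * Real.log (s i + 0 * c i)
          + lam.1 + ω * ∑ j', |lam.2.2 j'| := by
        rw [← hlam2]
        have h5 := hFeq 0
        simp only [zero_mul, add_zero, abs_abs] at h5 ⊢
        exact h5
      rw [h4] at h3
      have h6 := mul_le_mul_of_nonneg_left (habs t) hω.le
      rw [mul_add] at h6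
      linarith
    have h0 := aux_abs _ _ ω hd hee
    rw [hconv c] at h0
    rw [abs_neg] at h0
    simpa [hc] using h0
end

section
/- Let n ≥ 1, let D_1,…,D_n ∈ {0,1} with D_i = 1 for at least one i, let a_1,…,a_n ∈ ℝ^q, b_1,…,b_n ∈ ℝ^m, and let ω > 0. Let S be the set of p = (p_1,…,p_n) ∈ ℝ^n such that p_i > 0 for every i with D_i = 1, Σ_{i: D_i=1} p_i = 1, Σ_{i: D_i=1} p_i·a_i = 0 in ℝ^q, and |Σ_{i: D_i=1} p_i·b_{ij}| ≤ ω for every j = 1,…,m. Assume the Slater condition: there exists p° ∈ S with |Σ_{i: D_i=1} p°_i·b_{ij}| < ω for every j. If p̃ ∈ S maximizes the objective Σ_{i: D_i=1} log p_i over S, then there exist λ0 ∈ ℝ, λ1 ∈ ℝ^q and λ2 ∈ ℝ^m such that n·p̃_i = (λ0 + ⟨λ1,a_i⟩ + ⟨λ2,b_i⟩)^{−1} for every i with D_i = 1. -/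
open Finset

/-- The maximizer of the treatment-group log-empirical-likelihood subject to the sum-to-one,
internal bias correction, and soft covariate balancing constraints (under a Slater condition)
has the inverse-linear form `n * p i = (λ0 + ⟨λ1, a i⟩ + ⟨λ2, b i⟩)⁻¹`. -/
theorem stmt_1 (n q m : ℕ) (hn : 1 ≤ n)
    (D : Fin n → ℝ) (hD : ∀ i, D i = 0 ∨ D i = 1) (hD1 : ∃ i, D i = 1)
    (a : Fin n → Fin q → ℝ) (b : Fin n → Fin m → ℝ)
    (ω : ℝ) (hω : 0 < ω)
    (S : Set (Fin n → ℝ))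
    (hS : S = {p : Fin n → ℝ | (∀ i, D i = 1 → 0 < p i) ∧
      ∑ i ∈ univ.filter (fun i => D i = 1), p i = 1 ∧
      (∀ k, ∑ i ∈ univ.filter (fun i => D i = 1), p i * a i k = 0) ∧
      (∀ j, |∑ i ∈ univ.filter (fun i => D i = 1), p i * b i j| ≤ ω)})
    (hSlater : ∃ p0 ∈ S, ∀ j, |∑ i ∈ univ.filter (fun i => D i = 1), p0 i * b i j| < ω)
    (ptil : Fin n → ℝ) (hmem : ptil ∈ S)
    (hmax : ∀ p ∈ S, ∑ i ∈ univ.filter (fun i => D i = 1), Real.log (p i)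
      ≤ ∑ i ∈ univ.filter (fun i => D i = 1), Real.log (ptil i)) :
    ∃ (l0 : ℝ) (l1 : Fin q → ℝ) (l2 : Fin m → ℝ), ∀ i, D i = 1 →
      (n : ℝ) * ptil i = (l0 + ∑ k, l1 k * a i k + ∑ j, l2 j * b i j)⁻¹ := by
  classical
  subst hS
  set T : Finset (Fin n) := univ.filter (fun i => D i = 1) with hT
  obtain ⟨hpos, hsum, ha, hb⟩ := hmem
  have hposT : ∀ i ∈ T, 0 < ptil i := by
    intro i hi
    exact hpos i (mem_filter.mp hi).2
  -- Key perturbation lemma: any direction orthogonal to all constraint rows is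
  -- orthogonal to `i ↦ 1 / ptil i`.
  have key : ∀ c : Fin n → ℝ, (∑ i ∈ T, c i = 0) →
      (∀ k, ∑ i ∈ T, c i * a i k = 0) → (∀ j, ∑ i ∈ T, c i * b i j = 0) →
      ∑ i ∈ T, c i / ptil i = 0 := by
    intro c hc0 hca hcb
    set φ : ℝ → ℝ := fun t => ∑ i ∈ T, Real.log (ptil i + t * c i) with hφ
    have hev : ∀ᶠ t in nhds (0:ℝ), ∀ i ∈ T, 0 < ptil i + t * c i := by
      rw [Filter.eventually_all_finset]
      intro i hi
      have hcont : ContinuousAt (fun t : ℝ => ptil i + t * c i) 0 := by fun_prop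
      have := hcont.tendsto
      simp only [zero_mul, add_zero] at this
      exact this.eventually (eventually_gt_nhds (hposT i hi))
    have hloc : IsLocalMax φ 0 := by
      filter_upwards [hev] with t ht
      have hmemS : (fun i => ptil i + t * c i) ∈
          {p : Fin n → ℝ | (∀ i, D i = 1 → 0 < p i) ∧
            ∑ i ∈ T, p i = 1 ∧
            (∀ k, ∑ i ∈ T, p i * a i k = 0) ∧
            (∀ j, |∑ i ∈ T, p i * b i j| ≤ ω)} := by
        refine ⟨fun i hi => ht i (by simp [hT, hi]), ?_, ?_, ?_⟩
        · rw [Finset.sum_add_distrib, hsum, ← Finset.mul_sum, hc0, mul_zero, add_zero]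
        · intro k
          have : ∀ i ∈ T, (ptil i + t * c i) * a i k
              = ptil i * a i k + t * (c i * a i k) := by intro i _; ring
          rw [Finset.sum_congr rfl this, Finset.sum_add_distrib, ha k, ← Finset.mul_sum,
            hca k, mul_zero, add_zero]
        · intro j
          have : ∀ i ∈ T, (ptil i + t * c i) * b i j
              = ptil i * b i j + t * (c i * b i j) := by intro i _; ring
          rw [Finset.sum_congr rfl this, Finset.sum_add_distrib, ← Finset.mul_sum,
            hcb j, mul_zero, add_zero]
          exact hb j
      have := hmax _ hmemS
      simpa [hφ] using this
    have hd : HasDerivAt φ (∑ i ∈ T, c i / ptil i) 0 := by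
      apply HasDerivAt.fun_sum
      intro i hi
      have h1 : HasDerivAt (fun t : ℝ => ptil i + t * c i) (c i) 0 := by
        simpa using ((hasDerivAt_id (0:ℝ)).mul_const (c i)).const_add (ptil i)
      have h2 := h1.log (by simp [ne_of_gt (hposT i hi)])
      simpa using h2
    exact hloc.hasDerivAt_eq_zero hd
  -- Set up the span of the constraint rows in Euclidean space.
  let F : (Unit ⊕ Fin q ⊕ Fin m) → EuclideanSpace ℝ (Fin n) :=
    Sum.elim (fun _ => WithLp.toLp 2 (fun i => if D i = 1 then (1:ℝ) else 0))
      (Sum.elim (fun k => WithLp.toLp 2 (fun i => if D i = 1 then a i k else 0))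
        (fun j => WithLp.toLp 2 (fun i => if D i = 1 then b i j else 0)))
  let v : EuclideanSpace ℝ (Fin n) := WithLp.toLp 2 (fun i => if D i = 1 then ((n:ℝ) * ptil i)⁻¹ else 0)
  let W : Submodule ℝ (EuclideanSpace ℝ (Fin n)) := Submodule.span ℝ (Set.range F)
  have hvW : v ∈ W := by
    rw [← Submodule.orthogonal_orthogonal W, Submodule.mem_orthogonal]
    intro c hc
    have hrow : ∀ s, (inner ℝ (F s) c : ℝ) = 0 := fun s =>
      (Submodule.mem_orthogonal W c).mp hc (F s) (Submodule.subset_span (Set.mem_range_self s))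
    have hc0 : ∑ i ∈ T, c i = 0 := by
      have := hrow (Sum.inl ())
      simpa [F, PiLp.inner_apply, RCLike.inner_apply, ite_mul, Finset.sum_filter, hT]
        using this
    have hca : ∀ k, ∑ i ∈ T, c i * a i k = 0 := by
      intro k
      have := hrow (Sum.inr (Sum.inl k))
      simp only [F, Sum.elim_inr, Sum.elim_inl, PiLp.inner_apply, RCLike.inner_apply, PiLp.toLp_apply,
        conj_trivial, ite_mul, zero_mul] at this
      calc _ = ∑ x, if D x = 1 then a x k * c x else 0 := by
            simp only [hT, Finset.sum_filter]
            exact Finset.sum_congr rfl fun x _ => by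
              by_cases h : D x = 1 <;> simp [h, mul_comm]
        _ = 0 := (Finset.sum_congr rfl fun x _ => by split_ifs <;> ring).trans this
    have hcb : ∀ j, ∑ i ∈ T, c i * b i j = 0 := by
      intro j
      have := hrow (Sum.inr (Sum.inr j))
      simp only [F, Sum.elim_inr, PiLp.inner_apply, RCLike.inner_apply, PiLp.toLp_apply,
        conj_trivial, ite_mul, zero_mul] at this
      calc _ = ∑ x, if D x = 1 then b x j * c x else 0 := by
            simp only [hT, Finset.sum_filter]
            exact Finset.sum_congr rfl fun x _ => by
              by_cases h : D x = 1 <;> simp [h, mul_comm]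
        _ = 0 := (Finset.sum_congr rfl fun x _ => by split_ifs <;> ring).trans this
    have hk := key c hc0 hca hcb
    have : (inner ℝ c v : ℝ) = ∑ i ∈ T, c i * ((n:ℝ) * ptil i)⁻¹ := by
      simp [v, PiLp.inner_apply, RCLike.inner_apply, mul_ite, mul_zero, Finset.sum_filter, hT]
      exact Finset.sum_congr rfl fun x _ => by split_ifs <;> ring
    rw [this]
    have h2 : ∀ i ∈ T, c i * ((n:ℝ) * ptil i)⁻¹ = (n:ℝ)⁻¹ * (c i / ptil i) := by
      intro i _
      rw [mul_inv]
      ring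
    rw [Finset.sum_congr rfl h2, ← Finset.mul_sum, hk, mul_zero]
  obtain ⟨cf, hcf⟩ := (Submodule.mem_span_range_iff_exists_fun ℝ).mp hvW
  refine ⟨cf (Sum.inl ()), fun k => cf (Sum.inr (Sum.inl k)), fun j => cf (Sum.inr (Sum.inr j)),
    fun i hi => ?_⟩
  have happ : ∀ (s : Finset (Unit ⊕ Fin q ⊕ Fin m)), (∑ x ∈ s, cf x • F x) i
      = ∑ x ∈ s, cf x * F x i := by
    intro s
    induction s using Finset.induction with
    | empty => rfl
    | insert x s h ih => rw [Finset.sum_insert h, Finset.sum_insert h, ← ih]; rfl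
  have hval : ∑ x : Unit ⊕ Fin q ⊕ Fin m, cf x * F x i = v i := by
    rw [← happ, hcf]
  have hvi : v i = ((n:ℝ) * ptil i)⁻¹ := by simp [v, hi]
  have hexp : cf (Sum.inl ()) + ∑ k, cf (Sum.inr (Sum.inl k)) * a i k
      + ∑ j, cf (Sum.inr (Sum.inr j)) * b i j = ((n:ℝ) * ptil i)⁻¹ := by
    rw [← hvi, ← hval, Fintype.sum_sum_type, Fintype.sum_sum_type]
    simp [F, if_pos hi, add_assoc]
  rw [hexp, inv_inv]
end

section
/- Let (Ω, 𝓕, P) be a probability space, X : Ω → ℝ^p and D : Ω → {0,1} measurable, and mX the σ-algebra generated by X. Let Y(1), Y(0) : Ω → ℝ be measurable with Y(1) integrable, set Y = D·Y(1) + (1 − D)·Y(0), and assume D and Y(1) are conditionally independent given mX. Let π : ℝ^p → ℝ be measurable with π∘X a version of E[D ∣ mX] and c0 ≤ π(x) ≤ 1 − c0 for all x, for some c0 ∈ (0,1/2). Then for every bounded measurable m̄ : ℝ^p → ℝ, the augmented inverse probability weighted quantity D·Y/π(X) − ((D − π(X))/π(X))·m̄(X) is integrable with expectation E[D·Y/π(X)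 − ((D − π(X))/π(X))·m̄(X)] = E[Y(1)]. -/
open MeasureTheory ProbabilityTheory

lemma ae_indepFun_condExpKernel {Ω : Type*} {m' : MeasurableSpace Ω}
    [mΩ : MeasurableSpace Ω] [StandardBorelSpace Ω]
    {μ : Measure Ω} [IsProbabilityMeasure μ]
    {f g : Ω → ℝ} (hf : Measurable f) (hg : Measurable g)
    (hm' : m' ≤ mΩ)
    (hfg : CondIndepFun m' hm' f g μ) :
    ∀ᵐ ω ∂μ, IndepFun f g (condExpKernel (mΩ := mΩ) μ m' ω) := by
  have h : ∀ q : ℚ, ∀ r : ℚ, ∀ᵐ ω ∂μ,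
      condExpKernel (mΩ := mΩ) μ m' ω (f ⁻¹' Set.Iic (q:ℝ) ∩ g ⁻¹' Set.Iic (r:ℝ))
        = condExpKernel (mΩ := mΩ) μ m' ω (f ⁻¹' Set.Iic (q:ℝ))
          * condExpKernel (mΩ := mΩ) μ m' ω (g ⁻¹' Set.Iic (r:ℝ)) := by
    intro q r
    exact ae_of_ae_trim hm' (hfg (f ⁻¹' Set.Iic (q:ℝ)) (g ⁻¹' Set.Iic (r:ℝ))
      ⟨Set.Iic (q:ℝ), measurableSet_Iic, rfl⟩ ⟨Set.Iic (r:ℝ), measurableSet_Iic, rfl⟩)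
  have h2 := ae_all_iff.2 fun q => ae_all_iff.2 (h q)
  filter_upwards [h2] with ω hω
  haveI : IsProbabilityMeasure (condExpKernel (mΩ := mΩ) μ m' ω) :=
    IsMarkovKernel.isProbabilityMeasure ω
  set S : Set (Set ℝ) := ⋃ q : ℚ, {Set.Iic (q:ℝ)} with hS
  have hmemS : ∀ u ∈ S, ∃ q : ℚ, u = Set.Iic (q:ℝ) := by
    intro u hu
    simp only [hS, Set.mem_iUnion, Set.mem_singleton_iff] at hu
    obtain ⟨q, hq⟩ := hu
    exact ⟨q, hq⟩
  have hSin : ∀ q : ℚ, Set.Iic (q:ℝ) ∈ S := by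
    intro q; simp [hS]
  have hrealgen : (inferInstance : MeasurableSpace ℝ) = MeasurableSpace.generateFrom S := by
    rw [BorelSpace.measurable_eq (α := ℝ)]; exact Real.borel_eq_generateFrom_Iic_rat
  have hpi : ∀ h : Ω → ℝ, IsPiSystem ((fun s => h ⁻¹' s) '' S) := by
    intro h s hs t ht _
    obtain ⟨u, hu, rfl⟩ := hs
    obtain ⟨v, hv, rfl⟩ := ht
    obtain ⟨q, rfl⟩ := hmemS u hu
    obtain ⟨r, rfl⟩ := hmemS v hv
    refine ⟨Set.Iic ((min q r : ℚ) : ℝ), hSin _, ?_⟩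
    rw [← Set.preimage_inter, Set.Iic_inter_Iic]
    push_cast
    rfl
  have hcomap : ∀ h : Ω → ℝ, MeasurableSpace.comap h inferInstance
      = MeasurableSpace.generateFrom ((fun s => h ⁻¹' s) '' S) := by
    intro h
    rw [hrealgen, MeasurableSpace.comap_generateFrom]
  have hindepS : IndepSets ((fun s => f ⁻¹' s) '' S) ((fun s => g ⁻¹' s) '' S)
      (condExpKernel (mΩ := mΩ) μ m' ω) := by
    rintro s t ⟨u, hu, rfl⟩ ⟨v, hv, rfl⟩
    obtain ⟨q, rfl⟩ := hmemS u hu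
    obtain ⟨r, rfl⟩ := hmemS v hv
    filter_upwards with a
    simpa using hω q r
  exact IndepSets.indep (hf.comap_le) (hg.comap_le) (hpi f) (hpi g)
    (hcomap f) (hcomap g) hindepS

lemma condexp_mul_of_condIndepFun {Ω : Type*} {m' : MeasurableSpace Ω}
    [mΩ : MeasurableSpace Ω] [StandardBorelSpace Ω]
    {μ : Measure Ω} [IsProbabilityMeasure μ]
    {f g : Ω → ℝ} (hf : Measurable f) (hg : Measurable g)
    (hfb : ∀ ω, |f ω| ≤ 1) (hgint : Integrable g μ)
    (hm' : m' ≤ mΩ)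
    (hfg : CondIndepFun m' hm' f g μ) :
    (μ[(fun ω => f ω * g ω)|m']) =ᵐ[μ] fun ω => ((μ[f|m']) ω) * ((μ[g|m']) ω) := by
  have hfint : Integrable f μ := by
    refine (integrable_const (1:ℝ)).mono' hf.aestronglyMeasurable (ae_of_all _ fun ω => ?_)
    simpa [Real.norm_eq_abs] using hfb ω
  have hmul : Integrable (fun ω => f ω * g ω) μ := by
    refine hgint.abs.mono' (hf.mul hg).aestronglyMeasurable (ae_of_all _ fun ω => ?_)
    rw [Real.norm_eq_abs, abs_mul]
    have h1 := abs_nonneg (g ω)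
    nlinarith [hfb ω, abs_nonneg (f ω)]
  have hk := ae_indepFun_condExpKernel hf hg hm' hfg
  have hgk := hgint.condExpKernel_ae (m := m')
  have h1 := condExp_ae_eq_integral_condExpKernel hm' hmul
  have h2 := condExp_ae_eq_integral_condExpKernel hm' hfint
  have h3 := condExp_ae_eq_integral_condExpKernel hm' hgint
  filter_upwards [hk, hgk, h1, h2, h3] with ω hkω hgkω h1ω h2ω h3ω
  rw [h1ω, h2ω, h3ω]
  haveI : IsProbabilityMeasure (condExpKernel (mΩ := mΩ) μ m' ω) :=
    IsMarkovKernel.isProbabilityMeasure ω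
  have hfk : Integrable f (condExpKernel (mΩ := mΩ) μ m' ω) := by
    refine (integrable_const (1:ℝ)).mono' hf.aestronglyMeasurable (ae_of_all _ fun ω' => ?_)
    simpa [Real.norm_eq_abs] using hfb ω'
  exact IndepFun.integral_mul_eq_mul_integral hkω hfk.aestronglyMeasurable hgkω.aestronglyMeasurable

/-- Propensity-score direction of double robustness of the AIPW functional: for any
bounded measurable outcome regression function `mbar`, the AIPW quantity identifies
`E[Y(1)]` when the propensity score is correct. -/
theorem stmt_5 {Ω : Type*} [MeasurableSpace Ω] [StandardBorelSpace Ω] [Nonempty Ω]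
    (P : Measure Ω) [IsProbabilityMeasure P]
    {p : ℕ} (X : Ω → (Fin p → ℝ)) (hX : Measurable X)
    (D : Ω → ℝ) (hDmeas : Measurable D) (hD : ∀ ω, D ω = 0 ∨ D ω = 1)
    (Y1 Y0 : Ω → ℝ) (hY1meas : Measurable Y1) (hY0meas : Measurable Y0)
    (hY1int : Integrable Y1 P)
    (Y : Ω → ℝ) (hY : ∀ ω, Y ω = D ω * Y1 ω + (1 - D ω) * Y0 ω)
    (hindep : ProbabilityTheory.CondIndepFun (MeasurableSpace.comap X inferInstance)
      hX.comap_le D Y1 P)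
    (π : (Fin p → ℝ) → ℝ) (hπmeas : Measurable π)
    (hπ : (fun ω => π (X ω)) =ᵐ[P] P[D | MeasurableSpace.comap X inferInstance])
    (c0 : ℝ) (hc0 : c0 ∈ Set.Ioo (0 : ℝ) (1 / 2))
    (hbound : ∀ x, c0 ≤ π x ∧ π x ≤ 1 - c0) :
    ∀ mbar : (Fin p → ℝ) → ℝ, Measurable mbar → (∃ Cb : ℝ, ∀ x, |mbar x| ≤ Cb) →
      Integrable (fun ω => D ω * Y ω / π (X ω)
        - ((D ω - π (X ω)) / π (X ω)) * mbar (X ω)) P ∧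
      ∫ ω, (D ω * Y ω / π (X ω) - ((D ω - π (X ω)) / π (X ω)) * mbar (X ω)) ∂P
        = ∫ ω, Y1 ω ∂P := by
  intro mbar hmbar hCb
  obtain ⟨Cb, hCb⟩ := hCb
  have hc0pos : (0:ℝ) < c0 := hc0.1
  have hπpos : ∀ x, 0 < π x := fun x => lt_of_lt_of_le hc0pos (hbound x).1
  have hπne : ∀ x, π x ≠ 0 := fun x => (hπpos x).ne'
  have hπle1 : ∀ x, π x ≤ 1 := fun x => (hbound x).2.trans (by linarith)
  have hCb0 : 0 ≤ Cb := le_trans (abs_nonneg _) (hCb (X (Classical.arbitrary Ω)))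
  have hDabs : ∀ ω, |D ω| ≤ 1 := by
    intro ω; rcases hD ω with h | h <;> simp [h]
  have hDY : ∀ ω, D ω * Y ω = D ω * Y1 ω := by
    intro ω; rcases hD ω with h | h <;> simp [hY ω, h]
  -- measurability facts
  have hπX : Measurable fun ω => π (X ω) := hπmeas.comp hX
  have hXm : Measurable[MeasurableSpace.comap X inferInstance] X :=
    measurable_iff_comap_le.2 le_rfl
  have hDabsle : ∀ ω, |D ω - π (X ω)| ≤ 1 := by
    intro ω
    have h1 := (hbound (X ω)).1
    have h2 := hπle1 (X ω)
    rcases hD ω with h | h <;> rw [h, abs_le] <;> constructor <;> linarith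
  have hinvabs : ∀ x, |(π x)⁻¹| ≤ c0⁻¹ := by
    intro x
    rw [abs_of_pos (inv_pos.2 (hπpos x))]
    exact inv_anti₀ hc0pos (hbound x).1
  -- integrands
  set g : Ω → ℝ := fun ω => D ω * Y1 ω with hg
  set F1 : Ω → ℝ := fun ω => (π (X ω))⁻¹ * (D ω * Y1 ω) with hF1
  set k : (Fin p → ℝ) → ℝ := fun x => mbar x / π x with hk
  set F2 : Ω → ℝ := fun ω => k (X ω) * (D ω - π (X ω)) with hF2
  have hkabs : ∀ x, |k x| ≤ Cb * c0⁻¹ := by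
    intro x
    show |mbar x / π x| ≤ Cb * c0⁻¹
    rw [div_eq_mul_inv, abs_mul]
    exact mul_le_mul (hCb x) (hinvabs x) (abs_nonneg _) hCb0
  have hgmeas : Measurable g := hDmeas.mul hY1meas
  have hgint : Integrable g P := by
    refine hY1int.abs.mono' hgmeas.aestronglyMeasurable (ae_of_all _ fun ω => ?_)
    rw [Real.norm_eq_abs, hg, abs_mul]
    nlinarith [hDabs ω, abs_nonneg (Y1 ω), abs_nonneg (D ω)]
  have hF1meas : Measurable F1 := (hπX.inv).mul hgmeas
  have hF1int : Integrable F1 P := by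
    refine (hY1int.abs.const_mul c0⁻¹).mono' hF1meas.aestronglyMeasurable
      (ae_of_all _ fun ω => ?_)
    show ‖(π (X ω))⁻¹ * (D ω * Y1 ω)‖ ≤ c0⁻¹ * |Y1 ω|
    rw [Real.norm_eq_abs, abs_mul, abs_mul]
    have h2 : |D ω| * |Y1 ω| ≤ |Y1 ω| := mul_le_of_le_one_left (abs_nonneg _) (hDabs ω)
    exact mul_le_mul (hinvabs (X ω)) h2 (by positivity) (inv_nonneg.2 hc0pos.le)
  have hkXmeas : Measurable fun ω => k (X ω) := (hmbar.div hπmeas).comp hX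
  have hF2meas : Measurable F2 := hkXmeas.mul (hDmeas.sub hπX)
  have hF2int : Integrable F2 P := by
    refine (integrable_const (Cb * c0⁻¹)).mono' hF2meas.aestronglyMeasurable
      (ae_of_all _ fun ω => ?_)
    rw [Real.norm_eq_abs, hF2, abs_mul]
    have h1 := hkabs (X ω)
    have h2 := hDabsle ω
    have h3 := abs_nonneg (k (X ω))
    have h4 := abs_nonneg (D ω - π (X ω))
    nlinarith
  have hFeq : ∀ ω, D ω * Y ω / π (X ω) - ((D ω - π (X ω)) / π (X ω)) * mbar (X ω)
      = F1 ω - F2 ω := by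
    intro ω
    rw [hF1, hF2, hk, hDY ω]
    field_simp
  have hDint : Integrable D P := by
    refine (integrable_const (1:ℝ)).mono' hDmeas.aestronglyMeasurable
      (ae_of_all _ fun ω => by simpa [Real.norm_eq_abs] using hDabs ω)
  -- conditional expectation identities
  have hkey : (P[g|MeasurableSpace.comap X inferInstance]) =ᵐ[P]
      fun ω => ((P[D|MeasurableSpace.comap X inferInstance]) ω)
        * ((P[Y1|MeasurableSpace.comap X inferInstance]) ω) :=
    condexp_mul_of_condIndepFun hDmeas hY1meas hDabs hY1int hX.comap_le hindep
  have hkey' : (P[g|MeasurableSpace.comap X inferInstance]) =ᵐ[P]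
      fun ω => π (X ω) * ((P[Y1|MeasurableSpace.comap X inferInstance]) ω) := by
    filter_upwards [hkey, hπ] with ω h1 h2
    rw [h1, ← h2]
  -- ∫ F1 = ∫ Y1
  have hinvsm : StronglyMeasurable[MeasurableSpace.comap X inferInstance]
      fun ω => (π (X ω))⁻¹ := ((hπmeas.inv).comp hXm).stronglyMeasurable
  have hmulF1 : (P[F1|MeasurableSpace.comap X inferInstance]) =ᵐ[P]
      (fun ω => (π (X ω))⁻¹) * (P[g|MeasurableSpace.comap X inferInstance]) := by
    have := condExp_mul_of_stronglyMeasurable_left hinvsm (by exact hF1int) hgint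
    exact this
  have hcondF1 : (P[F1|MeasurableSpace.comap X inferInstance]) =ᵐ[P]
      (P[Y1|MeasurableSpace.comap X inferInstance]) := by
    filter_upwards [hmulF1, hkey'] with ω h1 h2
    rw [h1]
    show (π (X ω))⁻¹ * ((P[g|MeasurableSpace.comap X inferInstance]) ω) = _
    rw [h2, ← mul_assoc, inv_mul_cancel₀ (hπne (X ω)), one_mul]
  have hintF1 : ∫ ω, F1 ω ∂P = ∫ ω, Y1 ω ∂P := by
    rw [← integral_condExp hX.comap_le (f := F1), integral_congr_ae hcondF1,
      integral_condExp hX.comap_le]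
  -- ∫ F2 = 0
  have hksm : StronglyMeasurable[MeasurableSpace.comap X inferInstance]
      fun ω => k (X ω) := ((hmbar.div hπmeas).comp hXm).stronglyMeasurable
  have hkDint : Integrable (fun ω => k (X ω) * D ω) P := by
    refine (integrable_const (Cb * c0⁻¹)).mono' (hkXmeas.mul hDmeas).aestronglyMeasurable
      (ae_of_all _ fun ω => ?_)
    rw [Real.norm_eq_abs, abs_mul]
    have h1 := hkabs (X ω)
    have h2 := hDabs ω
    have h3 := abs_nonneg (k (X ω))
    have h4 := abs_nonneg (D ω)
    nlinarith
  have hmulF2 : (P[(fun ω => k (X ω) * D ω)|MeasurableSpace.comap X inferInstance]) =ᵐ[P]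
      (fun ω => k (X ω)) * (P[D|MeasurableSpace.comap X inferInstance]) := by
    have := condExp_mul_of_stronglyMeasurable_left hksm (by exact hkDint) hDint
    exact this
  have hcondF2 : (P[(fun ω => k (X ω) * D ω)|MeasurableSpace.comap X inferInstance]) =ᵐ[P]
      fun ω => k (X ω) * π (X ω) := by
    filter_upwards [hmulF2, hπ] with ω h1 h2
    rw [h1]
    show k (X ω) * ((P[D|MeasurableSpace.comap X inferInstance]) ω) = _
    rw [← h2]
  have hkπint : Integrable (fun ω => k (X ω) * π (X ω)) P := by
    refine (integrable_const (Cb * c0⁻¹)).mono' (hkXmeas.mul hπX).aestronglyMeasurable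
      (ae_of_all _ fun ω => ?_)
    rw [Real.norm_eq_abs, abs_mul]
    have h1 := hkabs (X ω)
    have h2 : |π (X ω)| ≤ 1 := by
      rw [abs_of_pos (hπpos (X ω))]; exact hπle1 (X ω)
    have h3 := abs_nonneg (k (X ω))
    have h4 := abs_nonneg (π (X ω))
    nlinarith
  have hintF2 : ∫ ω, F2 ω ∂P = 0 := by
    have hsplit : ∀ ω, F2 ω = k (X ω) * D ω - k (X ω) * π (X ω) := by
      intro ω; rw [hF2]; ring
    rw [integral_congr_ae (ae_of_all _ hsplit), integral_sub hkDint hkπint]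
    have : ∫ ω, k (X ω) * D ω ∂P = ∫ ω, k (X ω) * π (X ω) ∂P := by
      rw [← integral_condExp hX.comap_le (f := fun ω => k (X ω) * D ω), integral_congr_ae hcondF2]
    rw [this, sub_self]
  -- conclude
  constructor
  · exact (hF1int.sub hF2int).congr (ae_of_all _ fun ω => (hFeq ω).symm)
  · rw [integral_congr_ae (ae_of_all _ hFeq), integral_sub hF1int hF2int, hintF1, hintF2,
      sub_zero]
end

section
/- Let (Ω, 𝓕, P) be a probability space, X : Ω → ℝ^p and D : Ω → {0,1} measurable, and mX the σ-algebra generated by X. Let Y(1), Y(0) : Ω → ℝ be measurable with Y(1) integrable, set Y = D·Y(1) + (1 − D)·Y(0), and assume D and Y(1) are conditionally independent given mX. Let m : ℝ^p → ℝ be measurable with m∘X a version of E[Y(1) ∣ mX]. Then for every measurable π̄ : ℝ^p → ℝ satisfying c0 ≤ π̄(x) ≤ 1 − c0 for all x, for some c0 ∈ (0,1/2), the quantity D·Y/π̄(X) − ((D − π̄(X))/π̄(X))·m(X) is integrable with expectation E[D·Y/π̄(X) − ((D − π̄(X))/π̄(X))·m(X)] = E[Y(1)]. -/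
open MeasureTheory
open Filter

lemma aipw_aux_L {Ω : Type*} [MeasurableSpace Ω] (P : Measure Ω) [IsProbabilityMeasure P]
    (Y1 : Ω → ℝ) (hY1meas : Measurable Y1) (hY1int : Integrable Y1 P)
    (G : Ω → ℝ) (hG : AEStronglyMeasurable G P) (C : ℝ)
    (hGbd : ∀ᵐ ω ∂P, ‖G ω‖ ≤ C)
    (hbase : ∀ t : Set ℝ, MeasurableSet t →
      ∫ ω, Set.indicator t (fun _ => (1:ℝ)) (Y1 ω) * G ω ∂P = 0) :
    ∫ ω, Y1 ω * G ω ∂P = 0 := by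
  have hC0 : 0 ≤ C := by
    obtain ⟨ω, hω⟩ := hGbd.exists
    exact (norm_nonneg _).trans hω
  -- integrability of bounded measurable times G
  have hint : ∀ (f : Ω → ℝ), AEStronglyMeasurable f P → ∀ C' : ℝ, (∀ ω, ‖f ω‖ ≤ C') →
      Integrable (fun ω => f ω * G ω) P := by
    intro f hf C' hC'
    refine Integrable.mono' (integrable_const (C' * C)) (hf.mul hG) ?_
    filter_upwards [hGbd] with ω hω
    rw [norm_mul]
    exact mul_le_mul (hC' ω) hω (norm_nonneg _) ((norm_nonneg (f ω)).trans (hC' ω))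
  have hsimple : ∀ ψ : SimpleFunc ℝ ℝ, ∫ ω, ψ (Y1 ω) * G ω ∂P = 0 := by
    intro ψ
    induction ψ using SimpleFunc.induction with
    | @const c s hs =>
      have heq : ∀ ω, (SimpleFunc.piecewise s hs (SimpleFunc.const ℝ c)
          (SimpleFunc.const ℝ 0)) (Y1 ω) * G ω
          = c * (Set.indicator s (fun _ => (1:ℝ)) (Y1 ω) * G ω) := by
        intro ω
        by_cases h : Y1 ω ∈ s <;>
          simp [SimpleFunc.piecewise_apply, Set.indicator, h, mul_assoc]
      rw [integral_congr_ae (Eventually.of_forall heq), integral_const_mul, hbase s hs, mul_zero]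
    | @add ψ1 ψ2 hdis h1 h2 =>
      obtain ⟨C1, hC1⟩ := ψ1.exists_forall_norm_le
      obtain ⟨C2, hC2⟩ := ψ2.exists_forall_norm_le
      have i1 := hint (fun ω => ψ1 (Y1 ω)) (ψ1.measurable.comp hY1meas).aestronglyMeasurable
        C1 (fun ω => hC1 _)
      have i2 := hint (fun ω => ψ2 (Y1 ω)) (ψ2.measurable.comp hY1meas).aestronglyMeasurable
        C2 (fun ω => hC2 _)
      have heq : ∀ ω, (ψ1 + ψ2) (Y1 ω) * G ω
          = ψ1 (Y1 ω) * G ω + ψ2 (Y1 ω) * G ω := by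
        intro ω
        simp [add_mul]
      rw [integral_congr_ae (Eventually.of_forall heq), integral_add i1 i2, h1, h2, add_zero]
  -- approximation
  have : Tendsto (fun n => ∫ ω, (SimpleFunc.approxOn (id : ℝ → ℝ) measurable_id Set.univ 0
      (Set.mem_univ 0) n) (Y1 ω) * G ω ∂P) atTop (nhds (∫ ω, Y1 ω * G ω ∂P)) := by
    refine tendsto_integral_of_dominated_convergence
      (fun ω => (‖Y1 ω‖ + ‖Y1 ω‖) * C) ?_ ?_ ?_ ?_
    · intro n
      exact (((SimpleFunc.approxOn (id : ℝ → ℝ) measurable_id Set.univ 0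
        (Set.mem_univ 0) n).measurable.comp hY1meas).aestronglyMeasurable).mul hG
    · exact (hY1int.norm.add hY1int.norm).mul_const C
    · intro n
      filter_upwards [hGbd] with ω hω
      rw [norm_mul]
      exact mul_le_mul (SimpleFunc.norm_approxOn_zero_le measurable_id (Set.mem_univ 0) (Y1 ω) n)
        hω (norm_nonneg _) (by positivity)
    · refine Eventually.of_forall fun ω => Tendsto.mul ?_ tendsto_const_nhds
      exact SimpleFunc.tendsto_approxOn measurable_id (Set.mem_univ 0) (by simp)
  have hzero : (fun n => ∫ ω, (SimpleFunc.approxOn (id : ℝ → ℝ) measurable_id Set.univ 0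
      (Set.mem_univ 0) n) (Y1 ω) * G ω ∂P) = fun _ => (0 : ℝ) := by
    funext n
    exact hsimple _
  rw [hzero] at this
  exact tendsto_nhds_unique this tendsto_const_nhds


/-- Outcome-regression direction of double robustness of the AIPW functional: for any
measurable weighting function `πbar` bounded away from 0 and 1, the AIPW quantity
identifies `E[Y(1)]` when the outcome regression `m(X) = E[Y(1) | X]` is correct. -/
theorem stmt_6 {Ω : Type*} [MeasurableSpace Ω] [StandardBorelSpace Ω] [Nonempty Ω]
    (P : Measure Ω) [IsProbabilityMeasure P]
    {p : ℕ} (X : Ω → (Fin p → ℝ)) (hX : Measurable X)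
    (D : Ω → ℝ) (hDmeas : Measurable D) (hD : ∀ ω, D ω = 0 ∨ D ω = 1)
    (Y1 Y0 : Ω → ℝ) (hY1meas : Measurable Y1) (hY0meas : Measurable Y0)
    (hY1int : Integrable Y1 P)
    (Y : Ω → ℝ) (hY : ∀ ω, Y ω = D ω * Y1 ω + (1 - D ω) * Y0 ω)
    (hindep : ProbabilityTheory.CondIndepFun (MeasurableSpace.comap X inferInstance)
      hX.comap_le D Y1 P)
    (m : (Fin p → ℝ) → ℝ) (hmmeas : Measurable m)
    (hm : (fun ω => m (X ω)) =ᵐ[P] P[Y1 | MeasurableSpace.comap X inferInstance]) :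
    ∀ (πbar : (Fin p → ℝ) → ℝ), Measurable πbar →
      ∀ c0 ∈ Set.Ioo (0 : ℝ) (1 / 2), (∀ x, c0 ≤ πbar x ∧ πbar x ≤ 1 - c0) →
      Integrable (fun ω => D ω * Y ω / πbar (X ω)
        - ((D ω - πbar (X ω)) / πbar (X ω)) * m (X ω)) P ∧
      ∫ ω, (D ω * Y ω / πbar (X ω) - ((D ω - πbar (X ω)) / πbar (X ω)) * m (X ω)) ∂P
        = ∫ ω, Y1 ω ∂P := by
  rename_i mΩ _sbΩ _neΩ _ipmP
  intro πbar hπmeas c0 hc0 hπbd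
  have hc0pos : (0:ℝ) < c0 := hc0.1
  set m' : MeasurableSpace Ω := MeasurableSpace.comap X inferInstance with hm'def
  have hle : m' ≤ mΩ := hX.comap_le
  -- basic facts
  have hπpos : ∀ x, 0 < πbar x := fun x => lt_of_lt_of_le hc0pos (hπbd x).1
  set g : Ω → ℝ := fun ω => (πbar (X ω))⁻¹ with hgdef
  have hgbd : ∀ ω, ‖g ω‖ ≤ c0⁻¹ := by
    intro ω
    rw [Real.norm_eq_abs, abs_of_pos (inv_pos.mpr (hπpos (X ω)))]
    exact inv_anti₀ hc0pos (hπbd (X ω)).1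
  have hgmeas : Measurable[mΩ] g := (hπmeas.comp hX).inv
  have hgSM : StronglyMeasurable[m'] g :=
    ((hπmeas.inv).comp (comap_measurable X)).stronglyMeasurable
  have hDbd : ∀ ω, ‖D ω‖ ≤ 1 := by
    intro ω
    rcases hD ω with h | h <;> simp [h]
  have hbint : ∀ (f : Ω → ℝ), AEStronglyMeasurable[mΩ] f P → ∀ C : ℝ,
      (∀ᵐ ω ∂P, ‖f ω‖ ≤ C) → Integrable f P :=
    fun f hf C hC => Integrable.mono' (integrable_const C) hf hC
  have hDint : Integrable D P :=
    hbint D hDmeas.aestronglyMeasurable 1 (Eventually.of_forall hDbd)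
  set q : Ω → ℝ := P[D | m'] with hqdef
  have hqSM : StronglyMeasurable[m'] q := stronglyMeasurable_condExp
  have hqASM : AEStronglyMeasurable[mΩ] q P := (hqSM.mono hle).aestronglyMeasurable
  have hqbd : ∀ᵐ ω ∂P, ‖q ω‖ ≤ 1 := by
    have h0 : 0 ≤ᵐ[P] q := condExp_nonneg (Eventually.of_forall fun ω => by
      rcases hD ω with h | h <;> simp [h])
    have h1 : q ≤ᵐ[P] P[(fun _ => (1:ℝ)) | m'] :=
      condExp_mono hDint (integrable_const 1)
        (Eventually.of_forall fun ω => by rcases hD ω with h | h <;> simp [h])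
    rw [condExp_const hle] at h1
    filter_upwards [h0, h1] with ω hω0 hω1
    simp only [Pi.zero_apply] at hω0
    rw [Real.norm_eq_abs, abs_le]
    exact ⟨by linarith, hω1⟩
  have hmX_int : Integrable (fun ω => m (X ω)) P := integrable_condExp.congr hm.symm
  have hmXSM : StronglyMeasurable[m'] (fun ω => m (X ω)) :=
    (hmmeas.comp (comap_measurable X)).stronglyMeasurable
  have hmX_ASM : AEStronglyMeasurable[mΩ] (fun ω => m (X ω)) P :=
    (hmmeas.comp hX).aestronglyMeasurable
  -- the pull-out property
  have hpull : ∀ f h : Ω → ℝ, StronglyMeasurable[m'] f →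
      Integrable (fun ω => f ω * h ω) P → Integrable h P →
      ∫ ω, f ω * h ω ∂P = ∫ ω, f ω * (P[h | m']) ω ∂P := by
    intro f h hf hfh hh
    have hcm : P[f * h | m'] =ᵐ[P] f * P[h | m'] :=
      condExp_mul_of_stronglyMeasurable_left hf hfh hh
    calc ∫ ω, f ω * h ω ∂P = ∫ ω, (P[f * h | m']) ω ∂P := (integral_condExp hle).symm
      _ = ∫ ω, (f * P[h | m']) ω ∂P := integral_congr_ae hcm
      _ = ∫ ω, f ω * (P[h | m']) ω ∂P := rfl
  -- conditional independence: product rule for indicators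
  have hiff := (ProbabilityTheory.condIndepFun_iff_condExp_inter_preimage_eq_mul
    (μ := P) (hm' := hle) hDmeas hY1meas).mp hindep
  have hA1 : (D ⁻¹' {1}).indicator (fun _ => (1:ℝ)) = D := by
    funext ω
    rcases hD ω with h | h <;> simp [Set.indicator, Set.mem_preimage, h]
  have hprod : ∀ t : Set ℝ, MeasurableSet t →
      P[(fun ω => D ω * Set.indicator t (fun _ => (1:ℝ)) (Y1 ω)) | m'] =ᵐ[P]
        fun ω => q ω * (P[(fun ω => Set.indicator t (fun _ => (1:ℝ)) (Y1 ω)) | m']) ω := by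
    intro t ht
    have h := hiff {1} t (measurableSet_singleton 1) ht
    have hA2 : (D ⁻¹' {1} ∩ Y1 ⁻¹' t).indicator (fun _ => (1:ℝ))
        = fun ω => D ω * Set.indicator t (fun _ => (1:ℝ)) (Y1 ω) := by
      funext ω
      rcases hD ω with hd | hd <;>
        by_cases hy : Y1 ω ∈ t <;>
        simp [Set.indicator, Set.mem_preimage, hd, hy]
    have hA3 : (Y1 ⁻¹' t).indicator (fun _ => (1:ℝ))
        = fun ω => Set.indicator t (fun _ => (1:ℝ)) (Y1 ω) := by
      funext ω
      by_cases hy : Y1 ω ∈ t <;> simp [Set.indicator, Set.mem_preimage, hy]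
    rw [hA2, hA3, hA1] at h
    exact h
  -- G and the base case
  set G : Ω → ℝ := fun ω => g ω * (D ω - q ω) with hGdef
  have hG_ASM : AEStronglyMeasurable[mΩ] G P :=
    hgmeas.aestronglyMeasurable.mul (hDmeas.aestronglyMeasurable.sub hqASM)
  have hGbd : ∀ᵐ ω ∂P, ‖G ω‖ ≤ c0⁻¹ * 2 := by
    filter_upwards [hqbd] with ω hω
    calc ‖G ω‖ = ‖g ω‖ * ‖D ω - q ω‖ := norm_mul _ _
      _ ≤ c0⁻¹ * 2 := by
          refine mul_le_mul (hgbd ω) ?_ (norm_nonneg _) (by positivity)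
          calc ‖D ω - q ω‖ ≤ ‖D ω‖ + ‖q ω‖ := norm_sub_le _ _
            _ ≤ 1 + 1 := add_le_add (hDbd ω) hω
            _ = 2 := by norm_num
  have hbase : ∀ t : Set ℝ, MeasurableSet t →
      ∫ ω, Set.indicator t (fun _ => (1:ℝ)) (Y1 ω) * G ω ∂P = 0 := by
    intro t ht
    set It : Ω → ℝ := fun ω => Set.indicator t (fun _ => (1:ℝ)) (Y1 ω) with hItdef
    have hIt_meas : Measurable[mΩ] It :=
      (measurable_const.indicator ht).comp hY1meas
    have hIt_bd : ∀ ω, ‖It ω‖ ≤ 1 := by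
      intro ω
      by_cases hy : Y1 ω ∈ t <;> simp [hItdef, Set.indicator, hy]
    have hDIt_int : Integrable (fun ω => D ω * It ω) P :=
      hbint _ (hDmeas.mul hIt_meas).aestronglyMeasurable 1
        (Eventually.of_forall fun ω => by
          rw [norm_mul]
          exact le_trans (mul_le_mul (hDbd ω) (hIt_bd ω) (norm_nonneg _) zero_le_one) (by norm_num))
    have hgDIt_int : Integrable (fun ω => g ω * (D ω * It ω)) P :=
      hbint _ (hgmeas.aestronglyMeasurable.mul hDIt_int.aestronglyMeasurable) (c0⁻¹ * 1)
        (Eventually.of_forall fun ω => by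
          rw [norm_mul]
          refine mul_le_mul (hgbd ω) ?_ (norm_nonneg _) (by positivity)
          rw [norm_mul]
          exact le_trans (mul_le_mul (hDbd ω) (hIt_bd ω) (norm_nonneg _) zero_le_one) (by norm_num))
    have hIt_int : Integrable It P :=
      hbint _ hIt_meas.aestronglyMeasurable 1 (Eventually.of_forall hIt_bd)
    have hgq_ASM : AEStronglyMeasurable[mΩ] (fun ω => g ω * q ω) P :=
      hgmeas.aestronglyMeasurable.mul hqASM
    have hgqIt_int : Integrable (fun ω => (g ω * q ω) * It ω) P := by
      refine hbint _ (hgq_ASM.mul hIt_int.aestronglyMeasurable) (c0⁻¹ * 1 * 1) ?_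
      filter_upwards [hqbd] with ω hω
      rw [norm_mul, norm_mul]
      refine mul_le_mul ?_ (hIt_bd ω) (norm_nonneg _) (by positivity)
      exact mul_le_mul (hgbd ω) hω (norm_nonneg _) (by positivity)
    have step1 : ∫ ω, g ω * (D ω * It ω) ∂P
        = ∫ ω, g ω * (P[(fun ω => D ω * It ω) | m']) ω ∂P :=
      hpull g (fun ω => D ω * It ω) hgSM hgDIt_int hDIt_int
    have step2 : ∫ ω, g ω * (P[(fun ω => D ω * It ω) | m']) ω ∂P
        = ∫ ω, (g ω * q ω) * (P[It | m']) ω ∂P := by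
      refine integral_congr_ae ?_
      filter_upwards [hprod t ht] with ω hω
      rw [hω, mul_assoc]
    have step3 : ∫ ω, (g ω * q ω) * It ω ∂P
        = ∫ ω, (g ω * q ω) * (P[It | m']) ω ∂P :=
      hpull (fun ω => g ω * q ω) It (hgSM.mul hqSM) hgqIt_int hIt_int
    have hsplit : ∫ ω, It ω * G ω ∂P
        = ∫ ω, g ω * (D ω * It ω) ∂P - ∫ ω, (g ω * q ω) * It ω ∂P := by
      rw [← integral_sub hgDIt_int hgqIt_int]
      refine integral_congr_ae (Eventually.of_forall fun ω => ?_)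
      simp only [hGdef, hItdef]
      ring
    rw [hsplit, step1, step2, step3, sub_self]
  -- apply the approximation lemma
  have hkey : ∫ ω, Y1 ω * G ω ∂P = 0 :=
    @aipw_aux_L Ω mΩ P _ipmP Y1 hY1meas hY1int G hG_ASM (c0⁻¹ * 2) hGbd hbase
  -- integrable pieces
  have hgDY1_int : Integrable (fun ω => g ω * (D ω * Y1 ω)) P := by
    refine Integrable.mono' (hY1int.norm.const_mul c0⁻¹)
      (hgmeas.aestronglyMeasurable.mul
        (hDmeas.aestronglyMeasurable.mul hY1int.aestronglyMeasurable)) ?_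
    refine Eventually.of_forall fun ω => ?_
    rw [norm_mul, norm_mul]
    refine mul_le_mul (hgbd ω) ?_ (by positivity) (by positivity)
    calc ‖D ω‖ * ‖Y1 ω‖ ≤ 1 * ‖Y1 ω‖ :=
          mul_le_mul_of_nonneg_right (hDbd ω) (norm_nonneg _)
      _ = ‖Y1 ω‖ := one_mul _
  have hgqY1_int : Integrable (fun ω => (g ω * q ω) * Y1 ω) P := by
    refine Integrable.mono' (hY1int.norm.const_mul c0⁻¹)
      ((hgmeas.aestronglyMeasurable.mul hqASM).mul hY1int.aestronglyMeasurable) ?_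
    filter_upwards [hqbd] with ω hω
    rw [norm_mul, norm_mul]
    refine mul_le_mul ?_ le_rfl (norm_nonneg _) (by positivity)
    calc ‖g ω‖ * ‖q ω‖ ≤ c0⁻¹ * 1 := mul_le_mul (hgbd ω) hω (norm_nonneg _) (by positivity)
      _ = c0⁻¹ := mul_one _
  have hgDmX_int : Integrable (fun ω => g ω * (D ω * m (X ω))) P := by
    refine Integrable.mono' (hmX_int.norm.const_mul c0⁻¹)
      (hgmeas.aestronglyMeasurable.mul (hDmeas.aestronglyMeasurable.mul hmX_ASM)) ?_
    refine Eventually.of_forall fun ω => ?_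
    rw [norm_mul, norm_mul]
    refine mul_le_mul (hgbd ω) ?_ (by positivity) (by positivity)
    calc ‖D ω‖ * ‖m (X ω)‖ ≤ 1 * ‖m (X ω)‖ :=
          mul_le_mul_of_nonneg_right (hDbd ω) (norm_nonneg _)
      _ = ‖m (X ω)‖ := one_mul _
  -- chain of identities
  have hEq1 : ∫ ω, g ω * (D ω * Y1 ω) ∂P = ∫ ω, (g ω * q ω) * Y1 ω ∂P := by
    have : ∫ ω, Y1 ω * G ω ∂P
        = ∫ ω, g ω * (D ω * Y1 ω) ∂P - ∫ ω, (g ω * q ω) * Y1 ω ∂P := by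
      rw [← integral_sub hgDY1_int hgqY1_int]
      refine integral_congr_ae (Eventually.of_forall fun ω => ?_)
      simp only [hGdef]
      ring
    rw [hkey] at this
    linarith
  have hEq2 : ∫ ω, (g ω * q ω) * Y1 ω ∂P = ∫ ω, (g ω * q ω) * m (X ω) ∂P := by
    rw [hpull (fun ω => g ω * q ω) Y1 (hgSM.mul hqSM) hgqY1_int hY1int]
    refine integral_congr_ae ?_
    filter_upwards [hm] with ω hω
    rw [← hω]
  have hgmXD_int : Integrable (fun ω => (g ω * m (X ω)) * D ω) P := by
    refine hgDmX_int.congr (Eventually.of_forall fun ω => ?_)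
    ring
  have hEq3 : ∫ ω, (g ω * q ω) * m (X ω) ∂P = ∫ ω, g ω * (D ω * m (X ω)) ∂P := by
    have h := hpull (fun ω => g ω * m (X ω)) D (hgSM.mul hmXSM) hgmXD_int hDint
    calc ∫ ω, (g ω * q ω) * m (X ω) ∂P
        = ∫ ω, (g ω * m (X ω)) * (P[D | m']) ω ∂P := by
          refine integral_congr_ae (Eventually.of_forall fun ω => ?_)
          show (g ω * q ω) * m (X ω) = (g ω * m (X ω)) * q ω
          ring
      _ = ∫ ω, (g ω * m (X ω)) * D ω ∂P := h.symm
      _ = ∫ ω, g ω * (D ω * m (X ω)) ∂P := by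
          refine integral_congr_ae (Eventually.of_forall fun ω => ?_)
          ring
  have hEqchain : ∫ ω, g ω * (D ω * Y1 ω) ∂P = ∫ ω, g ω * (D ω * m (X ω)) ∂P := by
    rw [hEq1, hEq2, hEq3]
  -- pointwise algebraic identity
  have hexpr : ∀ ω, D ω * Y ω / πbar (X ω) - ((D ω - πbar (X ω)) / πbar (X ω)) * m (X ω)
      = g ω * (D ω * Y1 ω) - g ω * (D ω * m (X ω)) + m (X ω) := by
    intro ω
    have hπ : πbar (X ω) ≠ 0 := (hπpos (X ω)).ne'
    have hDY : D ω * Y ω = D ω * Y1 ω := by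
      rw [hY ω]
      rcases hD ω with h | h <;> rw [h] <;> ring
    rw [hDY]
    show D ω * Y1 ω / πbar (X ω) - (D ω - πbar (X ω)) / πbar (X ω) * m (X ω)
      = (πbar (X ω))⁻¹ * (D ω * Y1 ω) - (πbar (X ω))⁻¹ * (D ω * m (X ω)) + m (X ω)
    field_simp
    ring
  have hint_final : Integrable (fun ω => D ω * Y ω / πbar (X ω)
      - ((D ω - πbar (X ω)) / πbar (X ω)) * m (X ω)) P :=
    ((hgDY1_int.sub hgDmX_int).add hmX_int).congr
      (Eventually.of_forall fun ω => (hexpr ω).symm)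
  refine ⟨hint_final, ?_⟩
  calc ∫ ω, (D ω * Y ω / πbar (X ω) - (D ω - πbar (X ω)) / πbar (X ω) * m (X ω)) ∂P
      = ∫ ω, (g ω * (D ω * Y1 ω) - g ω * (D ω * m (X ω)) + m (X ω)) ∂P :=
        integral_congr_ae (Eventually.of_forall hexpr)
    _ = (∫ ω, g ω * (D ω * Y1 ω) ∂P - ∫ ω, g ω * (D ω * m (X ω)) ∂P)
        + ∫ ω, m (X ω) ∂P := by
          have h1 : ∫ ω, (g ω * (D ω * Y1 ω) - g ω * (D ω * m (X ω)) + m (X ω)) ∂P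
              = ∫ ω, (g ω * (D ω * Y1 ω) - g ω * (D ω * m (X ω))) ∂P
                + ∫ ω, m (X ω) ∂P :=
            integral_add (hgDY1_int.sub hgDmX_int) hmX_int
          have h2 : ∫ ω, (g ω * (D ω * Y1 ω) - g ω * (D ω * m (X ω))) ∂P
              = ∫ ω, g ω * (D ω * Y1 ω) ∂P - ∫ ω, g ω * (D ω * m (X ω)) ∂P :=
            integral_sub hgDY1_int hgDmX_int
          rw [h1, h2]
    _ = ∫ ω, m (X ω) ∂P := by rw [hEqchain]; ring
    _ = ∫ ω, (P[Y1 | m']) ω ∂P := integral_congr_ae hm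
    _ = ∫ ω, Y1 ω ∂P := integral_condExp hle
end

section
/- Let (Ω, 𝓕, P) be a probability space, X : Ω → ℝ^p and D : Ω → {0,1} measurable, and mX the σ-algebra generated by X. Let π : ℝ^p → ℝ be measurable with π∘X a version of E[D ∣ mX]. Suppose there are weights d_1,…,d_q ≥ 0, a constant c0 ∈ (0,1/2), and measurable functions π_1,…,π_q : ℝ^p → [c0, 1 − c0] such that π(x) = Σ_{k=1}^q d_k·π_k(x) for P∘X^{−1}-almost every x, and E[π_k(X)] = P(D = 1) =: ρ for every k. Let b_1,…,b_m : ℝ^p → ℝ be measurable with each b_j(X) integrable. Define λ0* = ρ·Σ_{k=1}^q d_k and λ1* = (d_1,…,d_q). Then: (a) λ0* + Σ_{k=1}^q d_k·(π_k(X) − ρ) = π(X) almost surely; (b) E[D/π(X)] = 1; (c) E[D·(π_k(X) − ρ)/π(X)] = 0 for every k = 1,…,q; and (d) E[D·(b_j(X) − E[b_j(X)])/π(X)] = 0 for every j = 1,…,m. -/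
open MeasureTheory

/-- Population content of Proposition 1(i): when the true propensity score is a nonnegative
linear combination of working models, the inverse empirical likelihood weight at the
population Lagrange multipliers recovers the true propensity score, and all population
score conditions of the empirical likelihood dual problem hold. -/
theorem stmt_7 {Ω : Type*} [MeasurableSpace Ω] (P : Measure Ω) [IsProbabilityMeasure P]
    {p q m : ℕ} (hq : 1 ≤ q)
    (X : Ω → (Fin p → ℝ)) (hX : Measurable X)
    (D : Ω → ℝ) (hDmeas : Measurable D) (hD : ∀ ω, D ω = 0 ∨ D ω = 1)
    (π : (Fin p → ℝ) → ℝ) (hπmeas : Measurable π)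
    (hπ : (fun ω => π (X ω)) =ᵐ[P] P[D | MeasurableSpace.comap X inferInstance])
    (d : Fin q → ℝ) (hd : ∀ k, 0 ≤ d k)
    (c0 : ℝ) (hc0 : c0 ∈ Set.Ioo (0 : ℝ) (1 / 2))
    (πk : Fin q → (Fin p → ℝ) → ℝ) (hπkmeas : ∀ k, Measurable (πk k))
    (hπkbound : ∀ k x, c0 ≤ πk k x ∧ πk k x ≤ 1 - c0)
    (hmix : ∀ᵐ x ∂(P.map X), π x = ∑ k, d k * πk k x)
    (ρ : ℝ) (hρ : ρ = (P {ω | D ω = 1}).toReal)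
    (hmean : ∀ k, ∫ ω, πk k (X ω) ∂P = ρ)
    (b : Fin m → (Fin p → ℝ) → ℝ) (hbmeas : ∀ j, Measurable (b j))
    (hbint : ∀ j, Integrable (fun ω => b j (X ω)) P)
    (lam0 : ℝ) (hlam0 : lam0 = ρ * ∑ k, d k) :
    (∀ᵐ ω ∂P, lam0 + ∑ k, d k * (πk k (X ω) - ρ) = π (X ω)) ∧
    (∫ ω, D ω / π (X ω) ∂P = 1) ∧
    (∀ k, ∫ ω, D ω * (πk k (X ω) - ρ) / π (X ω) ∂P = 0) ∧
    (∀ j, ∫ ω, D ω * (b j (X ω) - ∫ ω', b j (X ω') ∂P) / π (X ω) ∂P = 0) := by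
  obtain ⟨hc0pos, hc0half⟩ := hc0
  have hm : MeasurableSpace.comap X inferInstance ≤ ‹MeasurableSpace Ω› := hX.comap_le
  haveI : SigmaFinite (P.trim hm) := inferInstance
  -- D is bounded and integrable
  have hDb : ∀ ω, ‖D ω‖ ≤ 1 := by
    intro ω; rcases hD ω with h | h <;> simp [h]
  have hDint : Integrable D P :=
    (integrable_const (1 : ℝ)).mono' hDmeas.aestronglyMeasurable (ae_of_all _ hDb)
  -- ∫ D = ρ
  have hDind : D = Set.indicator {ω | D ω = 1} (fun _ => (1 : ℝ)) := by
    funext ω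
    rcases hD ω with h | h <;> simp [Set.indicator_apply, h]
  have hDs : MeasurableSet {ω | D ω = 1} := hDmeas (measurableSet_singleton 1)
  have hintD : ∫ ω, D ω ∂P = ρ := by
    rw [hρ, show (fun ω => D ω) = D from rfl, hDind]
    exact (integral_indicator_const (1 : ℝ) hDs).trans (by rw [smul_eq_mul, mul_one, ← hDind]; rfl)
  -- πk ∘ X is integrable
  have hπkint : ∀ k, Integrable (fun ω => πk k (X ω)) P := by
    intro k
    refine (integrable_const (1 : ℝ)).mono' ((hπkmeas k).comp hX).aestronglyMeasurable
      (ae_of_all _ fun ω => ?_)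
    have h1 := (hπkbound k (X ω)).1
    have h2 := (hπkbound k (X ω)).2
    rw [Real.norm_eq_abs, abs_le]
    constructor <;> nlinarith
  -- mix identity pulled back to Ω
  have hmixΩ : ∀ᵐ ω ∂P, π (X ω) = ∑ k, d k * πk k (X ω) := by
    have hs : MeasurableSet {x : Fin p → ℝ | π x = ∑ k, d k * πk k x} :=
      measurableSet_eq_fun hπmeas (Finset.measurable_sum _ fun k _ => (hπkmeas k).const_mul (d k))
    exact (ae_map_iff hX.aemeasurable hs).mp hmix
  -- ∫ π(X) = ρ
  have hπXρ : ∫ ω, π (X ω) ∂P = ρ := by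
    rw [integral_congr_ae hπ, integral_condExp hm, hintD]
  -- ρ ≥ c0 > 0
  have hρpos : 0 < ρ := by
    have k0 : Fin q := ⟨0, hq⟩
    have : c0 ≤ ρ := by
      rw [← hmean k0]
      calc c0 = ∫ _ω, c0 ∂P := by simp
        _ ≤ ∫ ω, πk k0 (X ω) ∂P :=
          integral_mono (integrable_const c0) (hπkint k0) fun ω => (hπkbound k0 (X ω)).1
    linarith
  -- ∑ d = 1
  have hsum1 : ∑ k, d k = 1 := by
    have h1 : ∫ ω, (∑ k, d k * πk k (X ω)) ∂P = (∑ k, d k) * ρ := by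
      rw [integral_finset_sum _ fun k _ => (hπkint k).const_mul (d k), Finset.sum_mul]
      exact Finset.sum_congr rfl fun k _ => by rw [integral_const_mul, hmean k]
    have h2 : ∫ ω, π (X ω) ∂P = (∑ k, d k) * ρ := (integral_congr_ae hmixΩ).trans h1
    have h3 : (∑ k, d k) * ρ = 1 * ρ := by rw [one_mul, ← h2, hπXρ]
    exact mul_right_cancel₀ (ne_of_gt hρpos) h3
  -- lower bound on π(X)
  have hlow : ∀ᵐ ω ∂P, c0 ≤ π (X ω) := by
    filter_upwards [hmixΩ] with ω hω
    rw [hω]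
    calc c0 = ∑ k, d k * c0 := by rw [← Finset.sum_mul, hsum1, one_mul]
      _ ≤ ∑ k, d k * πk k (X ω) :=
        Finset.sum_le_sum fun k _ => mul_le_mul_of_nonneg_left (hπkbound k (X ω)).1 (hd k)
  -- key lemma
  have key : ∀ g : (Fin p → ℝ) → ℝ, Measurable g → Integrable (fun ω => g (X ω)) P →
      ∫ ω, D ω * g (X ω) / π (X ω) ∂P = ∫ ω, g (X ω) ∂P := by
    intro g hg hgint
    set h : (Fin p → ℝ) → ℝ := fun x => g x / π x with hh
    have hhmeas : Measurable h := hg.div hπmeas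
    have hhint : Integrable (fun ω => h (X ω)) P := by
      refine (hgint.norm.const_mul c0⁻¹).mono' ((hhmeas.comp hX).aestronglyMeasurable)
        ?_
      filter_upwards [hlow] with ω hω
      rw [Real.norm_eq_abs, hh]
      simp only [abs_div]
      rw [abs_of_nonneg (le_trans hc0pos.le hω)]
      calc |g (X ω)| / π (X ω) ≤ |g (X ω)| / c0 :=
            div_le_div_of_nonneg_left (abs_nonneg _) hc0pos hω
        _ = c0⁻¹ * ‖g (X ω)‖ := by rw [div_eq_inv_mul, Real.norm_eq_abs]
    have hDhint : Integrable ((fun ω => h (X ω)) * D) P := by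
      refine hhint.norm.mono' (((hhmeas.comp hX).mul hDmeas).aestronglyMeasurable)
        (ae_of_all _ fun ω => ?_)
      simp only [Pi.mul_apply, Real.norm_eq_abs, abs_mul]
      calc |h (X ω)| * |D ω| ≤ |h (X ω)| * 1 :=
            mul_le_mul_of_nonneg_left (by simpa [Real.norm_eq_abs] using hDb ω) (abs_nonneg _)
        _ = ‖h (X ω)‖ := by rw [mul_one, Real.norm_eq_abs]
    have hXm : @Measurable Ω (Fin p → ℝ) (MeasurableSpace.comap X inferInstance) _ X :=
      Measurable.of_comap_le le_rfl
    have hsm : StronglyMeasurable[MeasurableSpace.comap X inferInstance]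
        (fun ω => h (X ω)) := (hhmeas.comp hXm).stronglyMeasurable
    have hpull := condExp_mul_of_stronglyMeasurable_left (m := MeasurableSpace.comap X inferInstance)
      (μ := P) hsm hDhint hDint
    calc ∫ ω, D ω * g (X ω) / π (X ω) ∂P
        = ∫ ω, ((fun ω => h (X ω)) * D) ω ∂P := by
          refine integral_congr_ae (ae_of_all _ fun ω => ?_)
          simp only [Pi.mul_apply, hh]
          rw [mul_div_assoc, mul_comm]
      _ = ∫ ω, (P[(fun ω => h (X ω)) * D | MeasurableSpace.comap X inferInstance]) ω ∂P :=
          (integral_condExp hm).symm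
      _ = ∫ ω, h (X ω) * π (X ω) ∂P := by
          refine integral_congr_ae ?_
          filter_upwards [hpull, hπ] with ω h1 h2
          rw [h1, Pi.mul_apply, ← h2]
      _ = ∫ ω, g (X ω) ∂P := by
          refine integral_congr_ae ?_
          filter_upwards [hlow] with ω hω
          have hne : π (X ω) ≠ 0 := ne_of_gt (lt_of_lt_of_le hc0pos hω)
          rw [hh]
          field_simp
  refine ⟨?_, ?_, ?_, ?_⟩
  · filter_upwards [hmixΩ] with ω hω
    rw [hω, hlam0]
    simp only [mul_sub, Finset.sum_sub_distrib, ← Finset.sum_mul]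
    ring
  · have := key (fun _ => 1) measurable_const (integrable_const 1)
    simpa using this
  · intro k
    have := key (fun x => πk k x - ρ) ((hπkmeas k).sub measurable_const)
      ((hπkint k).sub (integrable_const ρ))
    rw [this, integral_sub (hπkint k) (integrable_const ρ), hmean k]
    simp
  · intro j
    set c := ∫ ω', b j (X ω') ∂P with hc
    have := key (fun x => b j x - c) ((hbmeas j).sub measurable_const)
      ((hbint j).sub (integrable_const c))
    rw [this, integral_sub (hbint j) (integrable_const c), ← hc]
    simp
end

section
/- Let (Ω, 𝓕, P) be a probability space, X : Ω → ℝ^p and D : Ω → {0,1} measurable, and mX the σ-algebra generated by X. Let Y(1) : Ω → ℝ be square-integrable and conditionally independent of D given mX. Let π : ℝ^p → ℝ be measurable with π∘X a version of E[D ∣ mX] and c0 ≤ π(x) ≤ 1 − c0 for all x, for some c0 ∈ (0,1/2). Let m : ℝ^p → ℝ be measurable with m∘X a version of E[Y(1) ∣ mX], and let v∘X be a version of E[(Y(1) − m(X))² ∣ mX]. Define the influence function ψ = m(X) + (D/π(X))·(Y(1) − m(X)). Then ψ is square-integrable, E[ψ] = E[Y(1)], and Var(ψ) = Var(m(X)) +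 E[v(X)/π(X)]. In particular, if additionally v(X) ≥ 1/c1 almost surely for some c1 > 0, then Var(ψ) ≥ 1/c1 > 0. -/
open MeasureTheory ProbabilityTheory
open scoped ENNReal

section Aux

variable {α : Type*} {m : MeasurableSpace α} {mα : MeasurableSpace α} {μ : Measure α}

lemma aux_integrable_mul {f g : α → ℝ} (hf : MemLp f 2 μ) (hg : MemLp g 2 μ) :
    Integrable (fun ω => f ω * g ω) μ := by
  refine Integrable.mono' ((hf.integrable_sq.add hg.integrable_sq).div_const 2)
    (hf.aestronglyMeasurable.mul hg.aestronglyMeasurable) ?_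
  filter_upwards with ω
  simp only [Pi.add_apply, Pi.div_apply]
  rw [Real.norm_eq_abs, abs_mul]
  nlinarith [sq_nonneg (|f ω| - |g ω|), sq_abs (f ω), sq_abs (g ω), abs_nonneg (f ω),
    abs_nonneg (g ω)]

lemma aux_memLp_condexp (hm : m ≤ mα) [IsProbabilityMeasure μ]
    {f : α → ℝ} (hf : MemLp f 2 μ) : MemLp (μ[f|m]) 2 μ := by
  set F : Lp ℝ 2 μ := hf.toLp f with hF
  have hFf : F =ᵐ[μ] f := hf.coeFn_toLp
  set G : Lp ℝ 2 μ := ↑(condExpL2 ℝ ℝ hm F) with hG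
  have hGmeas : AEStronglyMeasurable[m] (G : α → ℝ) μ := lpMeas.aestronglyMeasurable _
  have hGint : Integrable (G : α → ℝ) μ := (Lp.memLp G).integrable one_le_two
  have heq : (G : α → ℝ) =ᵐ[μ] μ[f|m] := by
    have h1 : ∀ s, MeasurableSet[m] s → μ s < ∞ → IntegrableOn (G : α → ℝ) s μ :=
      fun s _ _ => hGint.integrableOn
    have h2 : ∀ s, MeasurableSet[m] s → μ s < ∞ → IntegrableOn (μ[f|m]) s μ :=
      fun s _ _ => integrable_condExp.integrableOn
    have h3 : ∀ s, MeasurableSet[m] s → μ s < ∞ →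
        ∫ x in s, (G : α → ℝ) x ∂μ = ∫ x in s, (μ[f|m]) x ∂μ := by
      intro s hs hμs
      rw [setIntegral_condExp hm (hf.integrable one_le_two) hs]
      rw [hG, integral_condExpL2_eq hm F hs hμs.ne]
      exact setIntegral_congr_ae (hm s hs) (hFf.mono fun ω h _ => h)
    exact ae_eq_of_forall_setIntegral_eq_of_sigmaFinite' hm h1 h2 h3 hGmeas
      stronglyMeasurable_condExp.aestronglyMeasurable
  exact MemLp.ae_eq heq (Lp.memLp G)

lemma aux_int_bdd [IsFiniteMeasure μ] {f : α → ℝ} (hf : AEStronglyMeasurable f μ) (C : ℝ)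
    (h : ∀ ω, ‖f ω‖ ≤ C) : Integrable f μ :=
  (memLp_top_of_bound hf C (Filter.Eventually.of_forall h)).integrable le_top

end Aux

lemma aux_master {Ω : Type*} [MeasurableSpace Ω] [StandardBorelSpace Ω] [Nonempty Ω]
    (P : Measure Ω) [IsProbabilityMeasure P]
    {p : ℕ} (X : Ω → (Fin p → ℝ)) (hX : Measurable X)
    (D : Ω → ℝ) (hDmeas : Measurable D) (hD : ∀ ω, D ω = 0 ∨ D ω = 1)
    (Y1 : Ω → ℝ) (hY1meas : Measurable Y1)
    (hindep : ProbabilityTheory.CondIndepFun (MeasurableSpace.comap X inferInstance)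
      hX.comap_le D Y1 P)
    (π : (Fin p → ℝ) → ℝ) (hπmeas : Measurable π)
    (hπ : (fun ω => π (X ω)) =ᵐ[P] P[D | MeasurableSpace.comap X inferInstance])
    (hπ0 : ∀ x, 0 ≤ π x) (hπ1 : ∀ x, π x ≤ 1)
    (g : (Fin p → ℝ) × ℝ → ℝ) (hg : Measurable g) :
    ∫ ω, D ω * g (X ω, Y1 ω) ∂P = ∫ ω, π (X ω) * g (X ω, Y1 ω) ∂P := by
  have hm' : MeasurableSpace.comap X inferInstance ≤ (inferInstance : MeasurableSpace Ω) :=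
    hX.comap_le
  have hXc : Measurable[MeasurableSpace.comap X inferInstance] X := fun s hs => ⟨s, hs, rfl⟩
  have hπsm : StronglyMeasurable[MeasurableSpace.comap X inferInstance] (fun ω => π (X ω)) :=
    (hπmeas.comp hXc).stronglyMeasurable
  have hD0 : ∀ ω, 0 ≤ D ω := fun ω => by rcases hD ω with h | h <;> simp [h]
  have hD1 : ∀ ω, D ω ≤ 1 := fun ω => by rcases hD ω with h | h <;> simp [h]
  -- Step 1 : the set-integral identity on rectangles
  have key : ∀ s t : Set _, MeasurableSet s → MeasurableSet t →
      ∫ ω in X ⁻¹' s ∩ Y1 ⁻¹' t, D ω ∂P = ∫ ω in X ⁻¹' s ∩ Y1 ⁻¹' t, π (X ω) ∂P := by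
    intro s t hs ht
    have hsX : MeasurableSet[MeasurableSpace.comap X inferInstance] (X ⁻¹' s) := ⟨s, hs, rfl⟩
    set χ : Ω → ℝ := (Y1 ⁻¹' t).indicator (fun _ => (1:ℝ)) with hχ
    have hχmeas : Measurable χ := measurable_const.indicator (hY1meas ht)
    have hχbd : ∀ ω, ‖χ ω‖ ≤ 1 := by
      intro ω; by_cases h : ω ∈ Y1 ⁻¹' t <;> simp [hχ, Set.indicator_apply, h]
    have hχint : Integrable χ P := aux_int_bdd hχmeas.aestronglyMeasurable 1 hχbd
    have hDχint : Integrable (fun ω => D ω * χ ω) P := by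
      refine aux_int_bdd ((hDmeas.mul hχmeas).aestronglyMeasurable) 1 fun ω => ?_
      rw [norm_mul]
      calc ‖D ω‖ * ‖χ ω‖ ≤ 1 * 1 := by
            refine mul_le_mul ?_ (hχbd ω) (norm_nonneg _) zero_le_one
            rw [Real.norm_eq_abs, abs_le]; exact ⟨by linarith [hD0 ω], hD1 ω⟩
        _ = 1 := one_mul 1
    have hπχint : Integrable (fun ω => π (X ω) * χ ω) P := by
      refine aux_int_bdd (((hπmeas.comp hX).mul hχmeas).aestronglyMeasurable) 1 fun ω => ?_
      rw [norm_mul]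
      calc ‖π (X ω)‖ * ‖χ ω‖ ≤ 1 * 1 := by
            refine mul_le_mul ?_ (hχbd ω) (norm_nonneg _) zero_le_one
            rw [Real.norm_eq_abs, abs_le]; exact ⟨by linarith [hπ0 (X ω)], hπ1 (X ω)⟩
        _ = 1 := one_mul 1
    -- indicator identities
    have hDind : (fun ω => D ω * χ ω)
        = (D ⁻¹' {1} ∩ Y1 ⁻¹' t).indicator (fun _ => (1:ℝ)) := by
      funext ω
      by_cases h1 : ω ∈ Y1 ⁻¹' t
      · rcases hD ω with h | h <;>
          simp [hχ, Set.indicator_apply, h, h1, Set.mem_preimage] <;> norm_num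
      · simp [hχ, Set.indicator_apply, h1]
    have hDind2 : D = (D ⁻¹' {1}).indicator (fun _ => (1:ℝ)) := by
      funext ω
      rcases hD ω with h | h <;> simp [Set.indicator_apply, Set.mem_preimage, h] <;> norm_num
    -- conditional independence
    have hmul := (condIndepFun_iff_condExp_inter_preimage_eq_mul (hm' := hX.comap_le)
      hDmeas hY1meas).1 hindep {1} t (measurableSet_singleton 1) ht
    have hc1 : P[fun ω => D ω * χ ω|MeasurableSpace.comap X inferInstance]
        =ᵐ[P] fun ω => π (X ω) * (P[χ|MeasurableSpace.comap X inferInstance]) ω := by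
      rw [hDind]
      have hDc : P[D|MeasurableSpace.comap X inferInstance]
          = P[(D ⁻¹' {1}).indicator (fun _ => (1:ℝ))|MeasurableSpace.comap X inferInstance] := by
        rw [← hDind2]
      filter_upwards [hmul, hπ] with ω hω hπω
      rw [hω]
      congr 1
      rw [hπω, hDc]
    have hc2 : P[fun ω => π (X ω) * χ ω|MeasurableSpace.comap X inferInstance]
        =ᵐ[P] fun ω => π (X ω) * (P[χ|MeasurableSpace.comap X inferInstance]) ω := by
      have := condExp_mul_of_stronglyMeasurable_left (m := MeasurableSpace.comap X inferInstance)
        hπsm (g := χ) (by exact hπχint) hχint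
      exact this
    have e1 : ∫ ω in X ⁻¹' s ∩ Y1 ⁻¹' t, D ω ∂P = ∫ ω in X ⁻¹' s, D ω * χ ω ∂P := by
      rw [← setIntegral_indicator (hY1meas ht)]
      refine integral_congr_ae (Filter.Eventually.of_forall fun ω => ?_)
      by_cases h : ω ∈ Y1 ⁻¹' t <;> simp [hχ, Set.indicator_apply, h]
    have e2 : ∫ ω in X ⁻¹' s ∩ Y1 ⁻¹' t, π (X ω) ∂P
        = ∫ ω in X ⁻¹' s, π (X ω) * χ ω ∂P := by
      rw [← setIntegral_indicator (hY1meas ht)]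
      refine integral_congr_ae (Filter.Eventually.of_forall fun ω => ?_)
      by_cases h : ω ∈ Y1 ⁻¹' t <;> simp [hχ, Set.indicator_apply, h]
    rw [e1, e2, ← setIntegral_condExp hm' hDχint hsX, ← setIntegral_condExp hm' hπχint hsX]
    exact setIntegral_congr_ae (hm' _ hsX) ((hc1.trans hc2.symm).mono fun ω h _ => h)
  -- Step 2 : equality of the two pushforward measures
  have comp : ∀ (f : Ω → ℝ), Measurable f → (∀ ω, 0 ≤ f ω) → (∀ ω, f ω ≤ 1) →
      ∀ s t : Set _, MeasurableSet s → MeasurableSet t →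
      ((P.withDensity fun ω => ENNReal.ofReal (f ω)).map (fun ω => (X ω, Y1 ω))) (s ×ˢ t)
        = ENNReal.ofReal (∫ ω in X ⁻¹' s ∩ Y1 ⁻¹' t, f ω ∂P) := by
    intro f hf h0 h1 s t hs ht
    rw [Measure.map_apply (hX.prodMk hY1meas) (hs.prod ht)]
    rw [Set.mk_preimage_prod]
    rw [withDensity_apply _ ((hX hs).inter (hY1meas ht))]
    rw [← ofReal_integral_eq_lintegral_ofReal]
    · exact (aux_int_bdd hf.aestronglyMeasurable 1 fun ω => by
        rw [Real.norm_eq_abs, abs_le]; exact ⟨by linarith [h0 ω], h1 ω⟩).integrableOn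
    · exact Filter.Eventually.of_forall fun ω => h0 ω
  have hfin : ∀ (f : Ω → ℝ), Measurable f → (∀ ω, f ω ≤ 1) →
      IsFiniteMeasure (P.withDensity fun ω => ENNReal.ofReal (f ω)) := by
    intro f hf h1
    refine isFiniteMeasure_withDensity (ne_of_lt ?_)
    calc ∫⁻ ω, ENNReal.ofReal (f ω) ∂P ≤ ∫⁻ _, 1 ∂P :=
          lintegral_mono fun ω => ENNReal.ofReal_le_one.2 (h1 ω)
      _ = 1 := by simp
      _ < ∞ := ENNReal.one_lt_top
  haveI hfD := hfin D hDmeas hD1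
  haveI hfπ := hfin (fun ω => π (X ω)) (hπmeas.comp hX) fun ω => hπ1 (X ω)
  have hmeq : ((P.withDensity fun ω => ENNReal.ofReal (D ω)).map (fun ω => (X ω, Y1 ω)))
      = ((P.withDensity fun ω => ENNReal.ofReal (π (X ω))).map (fun ω => (X ω, Y1 ω))) := by
    have hrect : ∀ s t : Set _, MeasurableSet s → MeasurableSet t →
        ((P.withDensity fun ω => ENNReal.ofReal (D ω)).map (fun ω => (X ω, Y1 ω))) (s ×ˢ t)
          = ((P.withDensity fun ω => ENNReal.ofReal (π (X ω))).map
              (fun ω => (X ω, Y1 ω))) (s ×ˢ t) := by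
      intro s t hs ht
      rw [comp D hDmeas hD0 hD1 s t hs ht,
        comp (fun ω => π (X ω)) (hπmeas.comp hX) (fun ω => hπ0 (X ω)) (fun ω => hπ1 (X ω))
          s t hs ht, key s t hs ht]
    refine MeasureTheory.ext_of_generate_finite _ generateFrom_prod.symm isPiSystem_prod ?_ ?_
    · rintro _ ⟨s, hs, t, ht, rfl⟩
      exact hrect s t hs ht
    · rw [← Set.univ_prod_univ]
      exact hrect Set.univ Set.univ MeasurableSet.univ MeasurableSet.univ
  -- Step 3 : conclusion
  have conv : ∀ (f : Ω → ℝ), Measurable f → (∀ ω, 0 ≤ f ω) →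
      ∫ z, g z ∂((P.withDensity fun ω => ENNReal.ofReal (f ω)).map (fun ω => (X ω, Y1 ω)))
        = ∫ ω, f ω * g (X ω, Y1 ω) ∂P := by
    intro f hf h0
    rw [integral_map (hX.prodMk hY1meas).aemeasurable hg.aestronglyMeasurable]
    have hdens : (fun ω => ENNReal.ofReal (f ω)) = fun ω => ((f ω).toNNReal : ℝ≥0∞) := rfl
    rw [hdens, integral_withDensity_eq_integral_smul hf.real_toNNReal]
    refine integral_congr_ae (Filter.Eventually.of_forall fun ω => ?_)
    simp [NNReal.smul_def, Real.coe_toNNReal _ (h0 ω)]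
  rw [← conv D hDmeas hD0, ← conv (fun ω => π (X ω)) (hπmeas.comp hX) (fun ω => hπ0 (X ω)), hmeq]

/-- The efficient influence function `ψ = m(X) + (D/π(X))·(Y(1) − m(X))` is square
integrable, has mean `E[Y(1)]`, and variance `Var(m(X)) + E[v(X)/π(X)]`; in particular,
its variance is bounded below by `1/c1` when `v(X) ≥ 1/c1` almost surely. -/
theorem stmt_8 {Ω : Type*} [MeasurableSpace Ω] [StandardBorelSpace Ω] [Nonempty Ω]
    (P : Measure Ω) [IsProbabilityMeasure P]
    {p : ℕ} (X : Ω → (Fin p → ℝ)) (hX : Measurable X)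
    (D : Ω → ℝ) (hDmeas : Measurable D) (hD : ∀ ω, D ω = 0 ∨ D ω = 1)
    (Y1 : Ω → ℝ) (hY1meas : Measurable Y1) (hY1 : MemLp Y1 2 P)
    (hindep : ProbabilityTheory.CondIndepFun (MeasurableSpace.comap X inferInstance)
      hX.comap_le D Y1 P)
    (π : (Fin p → ℝ) → ℝ) (hπmeas : Measurable π)
    (hπ : (fun ω => π (X ω)) =ᵐ[P] P[D | MeasurableSpace.comap X inferInstance])
    (c0 : ℝ) (hc0 : c0 ∈ Set.Ioo (0 : ℝ) (1 / 2))
    (hbound : ∀ x, c0 ≤ π x ∧ π x ≤ 1 - c0)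
    (m : (Fin p → ℝ) → ℝ) (hmmeas : Measurable m)
    (hm : (fun ω => m (X ω)) =ᵐ[P] P[Y1 | MeasurableSpace.comap X inferInstance])
    (v : (Fin p → ℝ) → ℝ) (hvmeas : Measurable v)
    (hv : (fun ω => v (X ω)) =ᵐ[P]
      P[fun ω => (Y1 ω - m (X ω)) ^ 2 | MeasurableSpace.comap X inferInstance])
    (ψ : Ω → ℝ) (hψ : ∀ ω, ψ ω = m (X ω) + (D ω / π (X ω)) * (Y1 ω - m (X ω))) :
    MemLp ψ 2 P ∧
    (∫ ω, ψ ω ∂P = ∫ ω, Y1 ω ∂P) ∧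
    (ProbabilityTheory.variance ψ P
      = ProbabilityTheory.variance (fun ω => m (X ω)) P + ∫ ω, v (X ω) / π (X ω) ∂P) ∧
    (∀ c1 : ℝ, 0 < c1 → (∀ᵐ ω ∂P, 1 / c1 ≤ v (X ω)) →
      1 / c1 ≤ ProbabilityTheory.variance ψ P) := by
  have hm' : MeasurableSpace.comap X inferInstance ≤ (inferInstance : MeasurableSpace Ω) :=
    hX.comap_le
  have hXc : Measurable[MeasurableSpace.comap X inferInstance] X := fun s hs => ⟨s, hs, rfl⟩
  have hc0p : (0:ℝ) < c0 := hc0.1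
  have hπpos : ∀ x, 0 < π x := fun x => lt_of_lt_of_le hc0p (hbound x).1
  have hπne : ∀ x, π x ≠ 0 := fun x => (hπpos x).ne'
  have hπ0 : ∀ x, 0 ≤ π x := fun x => (hπpos x).le
  have hπ1 : ∀ x, π x ≤ 1 := fun x => (hbound x).2.trans (by linarith [hc0.1])
  have hD0 : ∀ ω, 0 ≤ D ω := fun ω => by rcases hD ω with h | h <;> simp [h]
  have hD1 : ∀ ω, D ω ≤ 1 := fun ω => by rcases hD ω with h | h <;> simp [h]
  have hπinvbd : ∀ x, ‖(π x)⁻¹‖ ≤ 1 / c0 := by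
    intro x
    rw [Real.norm_eq_abs, abs_of_pos (inv_pos.2 (hπpos x)), one_div]
    exact inv_anti₀ hc0p (hbound x).1
  have hmsm : StronglyMeasurable[MeasurableSpace.comap X inferInstance] (fun ω => m (X ω)) :=
    (hmmeas.comp hXc).stronglyMeasurable
  have hπinvsm : StronglyMeasurable[MeasurableSpace.comap X inferInstance]
      (fun ω => (π (X ω))⁻¹) := ((hπmeas.comp hXc).inv).stronglyMeasurable
  -- integrability facts
  have hY1i : Integrable Y1 P := hY1.integrable one_le_two
  have hmX2 : MemLp (fun ω => m (X ω)) 2 P :=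
    MemLp.ae_eq hm.symm (aux_memLp_condexp hm' hY1)
  have hmXi : Integrable (fun ω => m (X ω)) P := hmX2.integrable one_le_two
  have hW2 : MemLp (fun ω => Y1 ω - m (X ω)) 2 P := hY1.sub hmX2
  have hWi : Integrable (fun ω => Y1 ω - m (X ω)) P := hW2.integrable one_le_two
  have hW2i : Integrable (fun ω => (Y1 ω - m (X ω)) ^ 2) P := hW2.integrable_sq
  have hRbd : ∀ ω, |D ω / π (X ω)| ≤ 1 / c0 := by
    intro ω
    rw [abs_div, abs_of_pos (hπpos (X ω)), div_le_div_iff₀ (hπpos (X ω)) hc0p]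
    have h1 : |D ω| ≤ 1 := abs_le.2 ⟨by linarith [hD0 ω], hD1 ω⟩
    nlinarith [abs_nonneg (D ω), (hbound (X ω)).1]
  have hRW2 : MemLp (fun ω => (D ω / π (X ω)) * (Y1 ω - m (X ω))) 2 P := by
    refine MemLp.of_le_mul (c := 1 / c0) hW2
      (((hDmeas.div (hπmeas.comp hX)).mul (hY1meas.sub (hmmeas.comp hX))).aestronglyMeasurable)
      (Filter.Eventually.of_forall fun ω => ?_)
    rw [Real.norm_eq_abs, Real.norm_eq_abs, abs_mul]
    exact mul_le_mul_of_nonneg_right (hRbd ω) (abs_nonneg _)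
  have hRWi : Integrable (fun ω => (D ω / π (X ω)) * (Y1 ω - m (X ω))) P :=
    hRW2.integrable one_le_two
  have hψ2 : MemLp ψ 2 P :=
    MemLp.ae_eq (Filter.Eventually.of_forall fun ω => (hψ ω).symm) (hmX2.add hRW2)
  -- means
  have hEm : ∫ ω, m (X ω) ∂P = ∫ ω, Y1 ω ∂P := by
    rw [integral_congr_ae hm, integral_condExp hm']
  have hEW : ∫ ω, (Y1 ω - m (X ω)) ∂P = 0 := by
    rw [integral_sub hY1i hmXi, hEm, sub_self]
  have master := aux_master P X hX D hDmeas hD Y1 hY1meas hindep π hπmeas hπ hπ0 hπ1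
  -- (a)  E[(D/π)·W] = 0
  have hRW0 : ∫ ω, (D ω / π (X ω)) * (Y1 ω - m (X ω)) ∂P = 0 := by
    have h1 : (fun ω => (D ω / π (X ω)) * (Y1 ω - m (X ω)))
        = fun ω => D ω * ((fun z : (Fin p → ℝ) × ℝ => (z.2 - m z.1) / π z.1) (X ω, Y1 ω)) := by
      funext ω; simp only; ring
    have hg1 : Measurable (fun z : (Fin p → ℝ) × ℝ => (z.2 - m z.1) / π z.1) :=
      (measurable_snd.sub (hmmeas.comp measurable_fst)).div (hπmeas.comp measurable_fst)
    rw [h1, master _ hg1]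
    have h2 : (fun ω => π (X ω) * ((fun z : (Fin p → ℝ) × ℝ => (z.2 - m z.1) / π z.1) (X ω, Y1 ω)))
        = fun ω => Y1 ω - m (X ω) := by
      funext ω; simp only; field_simp [hπne (X ω)]
    rw [h2, hEW]
  -- mean of ψ
  have part2 : ∫ ω, ψ ω ∂P = ∫ ω, Y1 ω ∂P := by
    have h0 : ∫ ω, ψ ω ∂P
        = ∫ ω, (m (X ω) + (D ω / π (X ω)) * (Y1 ω - m (X ω))) ∂P :=
      integral_congr_ae (Filter.Eventually.of_forall hψ)
    rw [h0, integral_add hmXi hRWi, hRW0, add_zero, hEm]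
  -- (b)  E[m(X)·W] = 0
  have hPW : P[fun ω => Y1 ω - m (X ω)|MeasurableSpace.comap X inferInstance] =ᵐ[P] 0 := by
    have h1 : P[fun ω => Y1 ω - m (X ω)|MeasurableSpace.comap X inferInstance]
        =ᵐ[P] P[Y1|MeasurableSpace.comap X inferInstance]
          - P[fun ω => m (X ω)|MeasurableSpace.comap X inferInstance] :=
      condExp_sub hY1i hmXi _
    have h2 : P[fun ω => m (X ω)|MeasurableSpace.comap X inferInstance]
        = fun ω => m (X ω) := condExp_of_stronglyMeasurable hm' hmsm hmXi
    filter_upwards [h1, hm] with ω hω hmω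
    have h3 : (P[fun ω => m (X ω)|MeasurableSpace.comap X inferInstance]) ω = m (X ω) := by
      rw [h2]
    rw [hω, Pi.sub_apply, h3, Pi.zero_apply, hmω, sub_self]
  have hmW0 : ∫ ω, m (X ω) * (Y1 ω - m (X ω)) ∂P = 0 := by
    have hmWint : Integrable (fun ω => m (X ω) * (Y1 ω - m (X ω))) P :=
      aux_integrable_mul hmX2 hW2
    have hpull := condExp_mul_of_stronglyMeasurable_left (m := MeasurableSpace.comap X inferInstance)
      hmsm (g := fun ω => Y1 ω - m (X ω)) hmWint hWi
    have e : ∫ ω, m (X ω) * (Y1 ω - m (X ω)) ∂P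
        = ∫ ω, (P[(fun ω => m (X ω)) * fun ω => Y1 ω - m (X ω)|
            MeasurableSpace.comap X inferInstance]) ω ∂P :=
      (integral_condExp hm').symm
    rw [e, integral_congr_ae hpull]
    have hz : ((fun ω => m (X ω)) * P[fun ω => Y1 ω - m (X ω)|
        MeasurableSpace.comap X inferInstance]) =ᵐ[P] (fun _ => (0:ℝ)) := by
      filter_upwards [hPW] with ω hω
      rw [Pi.mul_apply, hω, Pi.zero_apply, mul_zero]
    rw [integral_congr_ae hz, integral_zero]
  -- (c)  cross term zero
  have hcross : ∫ ω, m (X ω) * ((D ω / π (X ω)) * (Y1 ω - m (X ω))) ∂P = 0 := by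
    have h1 : (fun ω => m (X ω) * ((D ω / π (X ω)) * (Y1 ω - m (X ω))))
        = fun ω => D ω * ((fun z : (Fin p → ℝ) × ℝ =>
            m z.1 * ((z.2 - m z.1) / π z.1)) (X ω, Y1 ω)) := by
      funext ω; simp only; ring
    have hg2 : Measurable (fun z : (Fin p → ℝ) × ℝ => m z.1 * ((z.2 - m z.1) / π z.1)) :=
      (hmmeas.comp measurable_fst).mul
        ((measurable_snd.sub (hmmeas.comp measurable_fst)).div (hπmeas.comp measurable_fst))
    rw [h1, master _ hg2]
    have h2 : (fun ω => π (X ω) * ((fun z : (Fin p → ℝ) × ℝ =>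
        m z.1 * ((z.2 - m z.1) / π z.1)) (X ω, Y1 ω)))
        = fun ω => m (X ω) * (Y1 ω - m (X ω)) := by
      funext ω; simp only; field_simp [hπne (X ω)]
    rw [h2, hmW0]
  -- (d)  quadratic term
  have hQ : ∫ ω, ((D ω / π (X ω)) * (Y1 ω - m (X ω))) ^ 2 ∂P
      = ∫ ω, v (X ω) / π (X ω) ∂P := by
    have h1 : (fun ω => ((D ω / π (X ω)) * (Y1 ω - m (X ω))) ^ 2)
        = fun ω => D ω * ((fun z : (Fin p → ℝ) × ℝ =>
            (z.2 - m z.1) ^ 2 / (π z.1) ^ 2) (X ω, Y1 ω)) := by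
      funext ω
      rcases hD ω with h | h <;> simp only [h] <;> ring
    have hg3 : Measurable (fun z : (Fin p → ℝ) × ℝ => (z.2 - m z.1) ^ 2 / (π z.1) ^ 2) :=
      ((measurable_snd.sub (hmmeas.comp measurable_fst)).pow_const 2).div
        ((hπmeas.comp measurable_fst).pow_const 2)
    rw [h1, master _ hg3]
    have h2 : (fun ω => π (X ω) * ((fun z : (Fin p → ℝ) × ℝ =>
        (z.2 - m z.1) ^ 2 / (π z.1) ^ 2) (X ω, Y1 ω)))
        = fun ω => (π (X ω))⁻¹ * (Y1 ω - m (X ω)) ^ 2 := by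
      funext ω; simp only; rw [eq_comm, inv_mul_eq_div]; field_simp [hπne (X ω)]
    rw [h2]
    have hfint : Integrable (fun ω => (π (X ω))⁻¹ * (Y1 ω - m (X ω)) ^ 2) P :=
      Integrable.bdd_mul hW2i ((hπmeas.comp hX).inv).aestronglyMeasurable
        (Filter.Eventually.of_forall fun ω => hπinvbd (X ω))
    have hpull := condExp_mul_of_stronglyMeasurable_left (m := MeasurableSpace.comap X inferInstance)
      hπinvsm (g := fun ω => (Y1 ω - m (X ω)) ^ 2) hfint hW2i
    have e : ∫ ω, (π (X ω))⁻¹ * (Y1 ω - m (X ω)) ^ 2 ∂P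
        = ∫ ω, (P[(fun ω => (π (X ω))⁻¹) * fun ω => (Y1 ω - m (X ω)) ^ 2|
            MeasurableSpace.comap X inferInstance]) ω ∂P :=
      (integral_condExp hm').symm
    rw [e, integral_congr_ae hpull]
    refine integral_congr_ae ?_
    filter_upwards [hv] with ω hω
    rw [Pi.mul_apply, ← hω, inv_mul_eq_div]
  -- variance identity
  have part3 : ProbabilityTheory.variance ψ P
      = ProbabilityTheory.variance (fun ω => m (X ω)) P + ∫ ω, v (X ω) / π (X ω) ∂P := by
    have hsq : ∀ ω, ψ ω ^ 2 = m (X ω) ^ 2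
        + (2 * (m (X ω) * ((D ω / π (X ω)) * (Y1 ω - m (X ω))))
            + ((D ω / π (X ω)) * (Y1 ω - m (X ω))) ^ 2) := by
      intro ω; rw [hψ ω]; ring
    have hm2i : Integrable (fun ω => m (X ω) ^ 2) P := hmX2.integrable_sq
    have hcri : Integrable (fun ω => m (X ω) * ((D ω / π (X ω)) * (Y1 ω - m (X ω)))) P :=
      aux_integrable_mul hmX2 hRW2
    have hQi : Integrable (fun ω => ((D ω / π (X ω)) * (Y1 ω - m (X ω))) ^ 2) P :=
      hRW2.integrable_sq
    have hEψ2 : ∫ ω, ψ ω ^ 2 ∂P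
        = ∫ ω, m (X ω) ^ 2 ∂P + ∫ ω, v (X ω) / π (X ω) ∂P := by
      have hsum2 : Integrable (fun ω => 2 * (m (X ω) * ((D ω / π (X ω)) * (Y1 ω - m (X ω))))
          + ((D ω / π (X ω)) * (Y1 ω - m (X ω))) ^ 2) P := (hcri.const_mul 2).add hQi
      rw [integral_congr_ae (Filter.Eventually.of_forall hsq), integral_add hm2i hsum2,
        integral_add (hcri.const_mul 2) hQi, integral_const_mul, hcross, hQ]
      ring
    rw [variance_eq_sub hψ2, variance_eq_sub hmX2]
    have e1 : ∫ ω, (ψ ^ 2) ω ∂P = ∫ ω, ψ ω ^ 2 ∂P := rfl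
    have e2 : ∫ ω, ((fun ω => m (X ω)) ^ 2) ω ∂P = ∫ ω, m (X ω) ^ 2 ∂P := rfl
    have e3 : ∫ ω, ψ ω ∂P = ∫ ω, m (X ω) ∂P := by rw [part2, hEm]
    simp only [Pi.pow_apply]
    rw [hEψ2]
    rw [show (∫ ω, ψ ω ∂P) = ∫ ω, m (X ω) ∂P from e3]
    ring
  refine ⟨hψ2, part2, part3, ?_⟩
  -- lower bound
  intro c1 hc1 hvc
  have hvXi : Integrable (fun ω => v (X ω)) P := integrable_condExp.congr hv.symm
  have hvπi : Integrable (fun ω => v (X ω) / π (X ω)) P := by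
    have h := Integrable.bdd_mul hvXi ((hπmeas.comp hX).inv).aestronglyMeasurable
      (Filter.Eventually.of_forall fun ω => hπinvbd (X ω))
    exact h.congr (Filter.Eventually.of_forall fun ω => inv_mul_eq_div _ _)
  have h2 : ∫ _ω, (1 / c1 : ℝ) ∂P ≤ ∫ ω, v (X ω) / π (X ω) ∂P := by
    refine integral_mono_ae (integrable_const _) hvπi ?_
    filter_upwards [hvc] with ω hω
    have hπω := hπpos (X ω)
    have hπ1ω := hπ1 (X ω)
    have hv0 : 0 ≤ v (X ω) := le_trans (by positivity) hω
    calc (1:ℝ) / c1 ≤ v (X ω) := hω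
      _ ≤ v (X ω) / π (X ω) := by rw [le_div_iff₀ hπω]; nlinarith
  have h1 : ∫ _ω, (1 / c1 : ℝ) ∂P = 1 / c1 := by simp
  have h3 := ProbabilityTheory.variance_nonneg (fun ω => m (X ω)) P
  rw [part3]
  rw [h1] at h2
  linarith
end

section
/- Let F : ℝ^d → ℝ be convex and differentiable, let ω > 0, and let λ* ∈ ℝ^d with support S = {j : λ*_j ≠ 0} of cardinality s ≥ 1. Assume ‖∇F(λ*)‖_∞ ≤ ω/2. Let λ̂ be a minimizer over ℝ^d of the penalized objective λ ↦ F(λ) + ω·‖λ‖₁, and set Δ = λ̂ − λ*. If there exists κ > 0 such that F(λ* + Δ) − F(λ*) − ⟨∇F(λ*), Δ⟩ ≥ κ·‖Δ‖₂², then: (i) ‖Δ_{Sᶜ}‖₁ ≤ 3·‖Δ_S‖₁, where Δ_S and Δ_{Sᶜ} denote the restrictions of Δ to the coordinates in S and its complement; and (ii) ‖Δ‖₂ ≤ 3·√s·ω/(2κ). -/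
open Finset

/-- Deterministic error bound for ℓ1-regularized M-estimation: if the gradient of the
convex loss at the sparse target is at most `ω/2` in sup-norm and the loss satisfies a
strong-convexity lower bound with curvature `κ` along the error `Δ`, then `Δ` lies in the
cone `‖Δ_{Sᶜ}‖₁ ≤ 3‖Δ_S‖₁` and `‖Δ‖₂ ≤ 3√s·ω/(2κ)`. -/
theorem stmt_11 {d : ℕ} (F : EuclideanSpace ℝ (Fin d) → ℝ)
    (hconv : ConvexOn ℝ Set.univ F)
    (g : EuclideanSpace ℝ (Fin d) → EuclideanSpace ℝ (Fin d))
    (hgrad : ∀ x, HasGradientAt F (g x) x)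
    (ω : ℝ) (hω : 0 < ω)
    (lam : EuclideanSpace ℝ (Fin d))
    (S : Finset (Fin d)) (hS : S = Finset.univ.filter (fun j => lam j ≠ 0))
    (s : ℕ) (hscard : s = S.card) (hs1 : 1 ≤ s)
    (hgradbound : ∀ j, |g lam j| ≤ ω / 2)
    (lamhat : EuclideanSpace ℝ (Fin d))
    (hmin : ∀ x, F lamhat + ω * ∑ j, |lamhat j| ≤ F x + ω * ∑ j, |x j|)
    (Δ : EuclideanSpace ℝ (Fin d)) (hΔ : Δ = lamhat - lam)
    (κ : ℝ) (hκ : 0 < κ)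
    (hrsc : κ * ‖Δ‖ ^ 2 ≤ F (lam + Δ) - F lam - (inner ℝ (g lam) Δ : ℝ)) :
    (∑ j ∈ Sᶜ, |Δ j| ≤ 3 * ∑ j ∈ S, |Δ j|) ∧
    ‖Δ‖ ≤ 3 * Real.sqrt s * ω / (2 * κ) := by
  set A : ℝ := ∑ j ∈ S, |Δ j| with hA
  set B : ℝ := ∑ j ∈ Sᶜ, |Δ j| with hB
  have hA0 : 0 ≤ A := Finset.sum_nonneg fun j _ => abs_nonneg _
  have hB0 : 0 ≤ B := Finset.sum_nonneg fun j _ => abs_nonneg _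
  have hlamhat : lam + Δ = lamhat := by rw [hΔ]; abel
  have hΔj : ∀ j, Δ j = lamhat j - lam j := by
    intro j; rw [hΔ]; rfl
  have hsplit : ∀ f : Fin d → ℝ, ∑ j, f j = ∑ j ∈ S, f j + ∑ j ∈ Sᶜ, f j := by
    intro f; rw [Finset.sum_add_sum_compl]
  -- inner product bound
  have hinner : |(inner ℝ (g lam) Δ : ℝ)| ≤ ω / 2 * (A + B) := by
    have h1 : (inner ℝ (g lam) Δ : ℝ) = ∑ j, g lam j * Δ j := by
      simp [PiLp.inner_apply, RCLike.inner_apply, mul_comm]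
    rw [h1]
    calc |∑ j, g lam j * Δ j| ≤ ∑ j, |g lam j * Δ j| :=
          Finset.abs_sum_le_sum_abs _ _
      _ ≤ ∑ j, ω / 2 * |Δ j| := by
          refine Finset.sum_le_sum fun j _ => ?_
          rw [abs_mul]
          exact mul_le_mul_of_nonneg_right (hgradbound j) (abs_nonneg _)
      _ = ω / 2 * (A + B) := by
          rw [← Finset.mul_sum, hsplit (fun j => |Δ j|)]
  -- basic inequality from minimality
  have hFdiff : F lamhat - F lam ≤ ω * (A - B) := by
    have h := hmin lam
    have h1 : F lamhat - F lam ≤ ω * (∑ j, |lam j| - ∑ j, |lamhat j|) := by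
      nlinarith [h]
    refine h1.trans ?_
    have h2 : ∑ j, |lam j| - ∑ j, |lamhat j| ≤ A - B := by
      rw [hsplit (fun j => |lam j|), hsplit (fun j => |lamhat j|), hA, hB]
      have hSle : ∑ j ∈ S, |lam j| - ∑ j ∈ S, |lamhat j| ≤ ∑ j ∈ S, |Δ j| := by
        rw [← Finset.sum_sub_distrib]
        refine Finset.sum_le_sum fun j _ => ?_
        rw [hΔj j]
        have := abs_sub_abs_le_abs_sub (lam j) (lamhat j)
        rw [abs_sub_comm] at this
        linarith
      have hSc : ∀ j ∈ Sᶜ, lam j = 0 := by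
        intro j hj
        rw [Finset.mem_compl, hS, Finset.mem_filter] at hj
        push_neg at hj
        exact hj (Finset.mem_univ j)
      have hSceq : ∑ j ∈ Sᶜ, |lam j| = 0 := by
        refine Finset.sum_eq_zero fun j hj => by rw [hSc j hj, abs_zero]
      have hSceq2 : ∑ j ∈ Sᶜ, |lamhat j| = ∑ j ∈ Sᶜ, |Δ j| := by
        refine Finset.sum_congr rfl fun j hj => ?_
        rw [hΔj j, hSc j hj, sub_zero]
      rw [hSceq, hSceq2]
      linarith
    nlinarith [h2, hω.le]
  -- key inequality
  have hkey : κ * ‖Δ‖ ^ 2 ≤ 3 * ω / 2 * A - ω / 2 * B := by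
    have h1 := hrsc
    rw [hlamhat] at h1
    have h2 : -(inner ℝ (g lam) Δ : ℝ) ≤ ω / 2 * (A + B) :=
      (neg_le_abs _).trans hinner
    nlinarith
  have hnorm2 : 0 ≤ κ * ‖Δ‖ ^ 2 := mul_nonneg hκ.le (sq_nonneg _)
  constructor
  · nlinarith
  -- Cauchy-Schwarz: A ≤ √s * ‖Δ‖
  have hCS : A ≤ Real.sqrt s * ‖Δ‖ := by
    have h1 : A ^ 2 ≤ (s : ℝ) * ‖Δ‖ ^ 2 := by
      have h2 := Finset.sum_mul_sq_le_sq_mul_sq S (fun _ => (1 : ℝ)) (fun j => |Δ j|)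
      simp only [one_mul, one_pow, Finset.sum_const, nsmul_eq_mul, mul_one] at h2
      have h3 : ∑ j ∈ S, |Δ j| ^ 2 ≤ ‖Δ‖ ^ 2 := by
        have h4 : ‖Δ‖ ^ 2 = ∑ j, |Δ j| ^ 2 := by
          rw [EuclideanSpace.norm_eq, Real.sq_sqrt]
          · simp [Real.norm_eq_abs]
          · exact Finset.sum_nonneg fun j _ => sq_nonneg _
        rw [h4]
        exact Finset.sum_le_sum_of_subset_of_nonneg (Finset.subset_univ S)
          (fun j _ _ => sq_nonneg _)
      calc A ^ 2 ≤ (S.card : ℝ) * ∑ j ∈ S, |Δ j| ^ 2 := h2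
        _ ≤ (s : ℝ) * ‖Δ‖ ^ 2 := by
            rw [hscard]
            exact mul_le_mul_of_nonneg_left h3 (Nat.cast_nonneg _)
    have hsq : (Real.sqrt s * ‖Δ‖) ^ 2 = (s : ℝ) * ‖Δ‖ ^ 2 := by
      rw [mul_pow, Real.sq_sqrt (Nat.cast_nonneg s)]
    have hrhs : 0 ≤ Real.sqrt s * ‖Δ‖ := mul_nonneg (Real.sqrt_nonneg _) (norm_nonneg _)
    nlinarith
  have hfinal : κ * ‖Δ‖ ^ 2 ≤ 3 * ω / 2 * (Real.sqrt s * ‖Δ‖) := by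
    have : 3 * ω / 2 * A ≤ 3 * ω / 2 * (Real.sqrt s * ‖Δ‖) := by
      apply mul_le_mul_of_nonneg_left hCS; positivity
    nlinarith
  rcases eq_or_lt_of_le (norm_nonneg Δ) with h0 | h0
  · rw [← h0]
    positivity
  · have h1 : κ * ‖Δ‖ ≤ 3 * ω / 2 * Real.sqrt s := by
      refine le_of_mul_le_mul_right ?_ h0
      have e1 : κ * ‖Δ‖ * ‖Δ‖ = κ * ‖Δ‖ ^ 2 := by ring
      have e2 : 3 * ω / 2 * Real.sqrt s * ‖Δ‖ = 3 * ω / 2 * (Real.sqrt s * ‖Δ‖) := by ring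
      rw [e1, e2]; exact hfinal
    rw [le_div_iff₀ (by positivity : (0:ℝ) < 2 * κ)]
    have e3 : ‖Δ‖ * (2 * κ) = 2 * (κ * ‖Δ‖) := by ring
    have e4 : 3 * Real.sqrt ↑s * ω = 2 * (3 * ω / 2 * Real.sqrt ↑s) := by ring
    rw [e3, e4]
    linarith [h1]
end

section
/- Let (Ω, 𝓕, P) be a probability space, X : Ω → ℝ^p and D : Ω → {0,1} measurable, and mX the σ-algebra generated by X. Let Y(1), Y(0) : Ω → ℝ be measurable with Y(1) integrable, set Y = D·Y(1) + (1 − D)·Y(0), and assume D and Y(1) are conditionally independent given mX. Let π : ℝ^p → ℝ be measurable with π∘X a version of E[D ∣ mX] and c0 ≤ π(x) ≤ 1 − c0 for all x, for some c0 ∈ (0,1/2), and let m : ℝ^p → ℝ be measurable with m∘X a version of E[Y(1) ∣ mX]. Fix bounded measurable functions h, g : ℝ^p → ℝ and define, for all real t with |t| small enough that c0/2 ≤ π(x) + t·h(x) ≤ 1 − c0/2 for all x, φ(t) = E[ D·Y/(π(X) + t·h(X)) − ((D − π(X) − t·h(X))/(π(X) + t·h(X)))·(m(X) + t·g(X)) ].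 Then φ(0) = E[Y(1)], φ is differentiable at t = 0, and φ′(0) = 0. -/
open MeasureTheory



open MeasureTheory ProbabilityTheory Filter Topology NNReal

lemma int_bdd {Ω : Type*} [MeasurableSpace Ω] {P : Measure Ω} [IsFiniteMeasure P]
    {f : Ω → ℝ} (hf : AEStronglyMeasurable f P) {C : ℝ} (h : ∀ ω, |f ω| ≤ C) :
    Integrable f P :=
  Integrable.mono' (integrable_const C) hf (Filter.Eventually.of_forall fun ω => by
    simpa [Real.norm_eq_abs] using h ω)

lemma aipw_key {Ω : Type*} [Nonempty Ω] {m' : MeasurableSpace Ω}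
    [mΩ : MeasurableSpace Ω] [StandardBorelSpace Ω]
    {P : Measure Ω} [IsProbabilityMeasure P] (hm' : m' ≤ mΩ)
    {D Y1 : Ω → ℝ} (hDmeas : Measurable D) (hY1meas : Measurable Y1)
    (hY1int : Integrable Y1 P) (hD : ∀ ω, D ω = 0 ∨ D ω = 1)
    (hindep : ProbabilityTheory.CondIndepFun m' hm' D Y1 P)
    {u : Ω → ℝ} (humeas : Measurable[m'] u) {Cu : ℝ} (hubd : ∀ ω, |u ω| ≤ Cu) :
    ∫ ω, u ω * (D ω * Y1 ω) ∂P
      = ∫ ω, u ω * ((P[D|m']) ω * (P[Y1|m']) ω) ∂P := by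
  classical
  have hCu0 : 0 ≤ Cu := le_trans (abs_nonneg _) (hubd Classical.ofNonempty)
  set A : Set Ω := D ⁻¹' {1} with hAdef
  have hA : MeasurableSet A := hDmeas (measurableSet_singleton 1)
  have hDind : D = A.indicator (fun _ => (1 : ℝ)) := by
    funext ω
    rcases hD ω with h0 | h1
    · have : ω ∉ A := by simp [hAdef, h0]
      simp [Set.indicator_of_notMem this, h0]
    · have : ω ∈ A := by simp [hAdef, h1]
      simp [Set.indicator_of_mem this, h1]
  have hDabs : ∀ ω, |D ω| ≤ 1 := fun ω => by rcases hD ω with h | h <;> simp [h]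
  have husm : StronglyMeasurable[m'] u := humeas.stronglyMeasurable
  have huaesm : AEStronglyMeasurable u P := (husm.mono hm').aestronglyMeasurable
  have hπbd : ∀ᵐ ω ∂P, |(P[D|m']) ω| ≤ ((1 : ℝ≥0) : ℝ) :=
    ae_bdd_condExp_of_ae_bdd (R := 1) (Filter.Eventually.of_forall fun ω => by
      simpa using hDabs ω)
  have hπaesm : AEStronglyMeasurable (P[D|m']) P :=
    (stronglyMeasurable_condExp.mono hm').aestronglyMeasurable
  have hprod : ∀ t : Set ℝ, MeasurableSet t →
      (P⟦A ∩ Y1 ⁻¹' t | m'⟧) =ᵐ[P]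
        fun ω => (P⟦A | m'⟧) ω * (P⟦Y1 ⁻¹' t | m'⟧) ω :=
    fun t ht => (ProbabilityTheory.condIndepFun_iff m' hm' D Y1 hDmeas hY1meas P).mp
      hindep A (Y1 ⁻¹' t) ⟨{1}, measurableSet_singleton 1, rfl⟩ ⟨t, ht, rfl⟩
  -- integrability of the pieces
  have hintL : ∀ (s : SimpleFunc ℝ ℝ),
      Integrable (fun ω => u ω * (D ω * s (Y1 ω))) P := by
    intro s
    obtain ⟨C, hC⟩ := s.exists_forall_norm_le
    refine int_bdd (huaesm.mul (hDmeas.aestronglyMeasurable.mul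
      ((s.measurable.comp hY1meas).aestronglyMeasurable))) (C := Cu * (1 * C)) ?_
    intro ω
    rw [abs_mul, abs_mul]
    have hC0 : 0 ≤ C := le_trans (norm_nonneg _) (hC 0)
    refine mul_le_mul (hubd ω) (mul_le_mul (hDabs ω) ?_ (abs_nonneg _) zero_le_one)
      (by positivity) hCu0
    simpa [Real.norm_eq_abs] using hC (Y1 ω)
  have hcondint : ∀ {Z : Ω → ℝ}, Integrable Z P →
      Integrable (fun ω => u ω * ((P[D|m']) ω * (P[Z|m']) ω)) P := by
    intro Z hZ
    have h1 : Integrable (fun ω => (P[D|m']) ω * (P[Z|m']) ω) P :=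
      Integrable.bdd_mul (c := 1) integrable_condExp hπaesm (by simpa using hπbd)
    exact Integrable.bdd_mul (c := Cu) h1 huaesm
      (Filter.Eventually.of_forall fun ω => by simpa [Real.norm_eq_abs] using hubd ω)
  have hZint : ∀ (s : SimpleFunc ℝ ℝ), Integrable (fun ω => s (Y1 ω)) P := by
    intro s
    obtain ⟨C, hC⟩ := s.exists_forall_norm_le
    exact int_bdd ((s.measurable.comp hY1meas)).aestronglyMeasurable
      (fun ω => by simpa [Real.norm_eq_abs] using hC (Y1 ω))
  -- base case : indicators of preimages of Y1
  have hbase : ∀ (t : Set ℝ), MeasurableSet t →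
      ∫ ω, u ω * (D ω * Set.indicator (Y1 ⁻¹' t) (fun _ => (1:ℝ)) ω) ∂P
        = ∫ ω, u ω * ((P[D|m']) ω
            * (P[Set.indicator (Y1 ⁻¹' t) (fun _ => (1:ℝ))|m']) ω) ∂P := by
    intro t ht
    have htY : MeasurableSet (Y1 ⁻¹' t) := hY1meas ht
    have hDmul : ∀ ω, D ω * Set.indicator (Y1 ⁻¹' t) (fun _ => (1:ℝ)) ω
        = Set.indicator (A ∩ Y1 ⁻¹' t) (fun _ => (1:ℝ)) ω := by
      intro ω
      rw [hDind]
      by_cases h1 : ω ∈ A <;> by_cases h2 : ω ∈ Y1 ⁻¹' t <;>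
        simp [Set.indicator_apply, h1, h2, Set.mem_inter_iff]
    have hIint : Integrable (Set.indicator (A ∩ Y1 ⁻¹' t) (fun _ => (1:ℝ))) P :=
      int_bdd ((measurable_const.indicator (hA.inter htY)).aestronglyMeasurable)
        (C := 1) (fun ω => by by_cases hω : ω ∈ A ∩ Y1 ⁻¹' t <;> simp [Set.indicator_apply, hω])
    have huIint : Integrable (u * Set.indicator (A ∩ Y1 ⁻¹' t) (fun _ => (1:ℝ))) P :=
      Integrable.bdd_mul (c := Cu) hIint huaesm
        (Filter.Eventually.of_forall fun ω => by simpa [Real.norm_eq_abs] using hubd ω)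
    calc ∫ ω, u ω * (D ω * Set.indicator (Y1 ⁻¹' t) (fun _ => (1:ℝ)) ω) ∂P
        = ∫ ω, (u * Set.indicator (A ∩ Y1 ⁻¹' t) (fun _ => (1:ℝ))) ω ∂P := by
          refine integral_congr_ae (Filter.Eventually.of_forall fun ω => ?_)
          simp only [Pi.mul_apply, hDmul ω]
      _ = ∫ ω, (P[(u * Set.indicator (A ∩ Y1 ⁻¹' t) (fun _ => (1:ℝ)))|m']) ω ∂P :=
          (integral_condExp hm').symm
      _ = ∫ ω, (u * (P[Set.indicator (A ∩ Y1 ⁻¹' t) (fun _ => (1:ℝ))|m'])) ω ∂P :=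
          integral_congr_ae (condExp_mul_of_stronglyMeasurable_left husm huIint hIint)
      _ = ∫ ω, u ω * ((P[D|m']) ω
            * (P[Set.indicator (Y1 ⁻¹' t) (fun _ => (1:ℝ))|m']) ω) ∂P := by
          refine integral_congr_ae ((hprod t ht).mono fun ω hω => ?_)
          simp only [Pi.mul_apply]
          rw [hω]
          rw [hDind]
  -- step: equality for all simple functions of Y1
  have key1 : ∀ (s : SimpleFunc ℝ ℝ),
      ∫ ω, u ω * (D ω * s (Y1 ω)) ∂P
        = ∫ ω, u ω * ((P[D|m']) ω * (P[fun ω => s (Y1 ω)|m']) ω) ∂P := by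
    intro s
    induction s using MeasureTheory.SimpleFunc.induction with
    | @const c t ht =>
      have hcoe : ∀ y, (SimpleFunc.piecewise t ht (SimpleFunc.const ℝ c)
          (SimpleFunc.const ℝ 0)) y = c * Set.indicator t (fun _ => (1:ℝ)) y := by
        intro y
        by_cases hy : y ∈ t <;>
          simp [SimpleFunc.piecewise_apply, Set.indicator_apply, hy]
      have hcoe' : ∀ ω, (SimpleFunc.piecewise t ht (SimpleFunc.const ℝ c)
          (SimpleFunc.const ℝ 0)) (Y1 ω)
            = c * Set.indicator (Y1 ⁻¹' t) (fun _ => (1:ℝ)) ω := by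
        intro ω
        rw [hcoe (Y1 ω)]
        by_cases hy : Y1 ω ∈ t <;> simp [Set.indicator_apply, hy]
      have hfun : (fun ω => (SimpleFunc.piecewise t ht (SimpleFunc.const ℝ c)
          (SimpleFunc.const ℝ 0)) (Y1 ω))
            = fun ω => (c • Set.indicator (Y1 ⁻¹' t) (fun _ => (1:ℝ))) ω := by
        funext ω; rw [hcoe' ω]; simp
      calc ∫ ω, u ω * (D ω * (SimpleFunc.piecewise t ht (SimpleFunc.const ℝ c)
            (SimpleFunc.const ℝ 0)) (Y1 ω)) ∂P
          = ∫ ω, c * (u ω * (D ω * Set.indicator (Y1 ⁻¹' t) (fun _ => (1:ℝ)) ω)) ∂P := by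
            refine integral_congr_ae (Filter.Eventually.of_forall fun ω => ?_)
            dsimp only
            rw [hcoe' ω]; ring
        _ = c * ∫ ω, u ω * (D ω * Set.indicator (Y1 ⁻¹' t) (fun _ => (1:ℝ)) ω) ∂P :=
            integral_const_mul c _
        _ = c * ∫ ω, u ω * ((P[D|m']) ω
              * (P[Set.indicator (Y1 ⁻¹' t) (fun _ => (1:ℝ))|m']) ω) ∂P := by
            rw [hbase t ht]
        _ = ∫ ω, c * (u ω * ((P[D|m']) ω
              * (P[Set.indicator (Y1 ⁻¹' t) (fun _ => (1:ℝ))|m']) ω)) ∂P :=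
            (integral_const_mul c _).symm
        _ = ∫ ω, u ω * ((P[D|m']) ω * (P[fun ω => (SimpleFunc.piecewise t ht
              (SimpleFunc.const ℝ c) (SimpleFunc.const ℝ 0)) (Y1 ω)|m']) ω) ∂P := by
            rw [hfun]
            refine integral_congr_ae ?_
            filter_upwards [condExp_smul (m := m') (μ := P) c
              (Set.indicator (Y1 ⁻¹' t) (fun _ => (1:ℝ)))] with ω hω
            rw [hω]
            simp only [Pi.smul_apply, smul_eq_mul]
            ring
    | @add f₁ f₂ hdisj ih₁ ih₂ =>
      have hadd : ∀ ω, (f₁ + f₂) (Y1 ω) = f₁ (Y1 ω) + f₂ (Y1 ω) := by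
        intro ω; simp
      calc ∫ ω, u ω * (D ω * (f₁ + f₂) (Y1 ω)) ∂P
          = ∫ ω, (u ω * (D ω * f₁ (Y1 ω)) + u ω * (D ω * f₂ (Y1 ω))) ∂P := by
            refine integral_congr_ae (Filter.Eventually.of_forall fun ω => ?_)
            dsimp only
            rw [hadd ω]; ring
        _ = ∫ ω, u ω * (D ω * f₁ (Y1 ω)) ∂P + ∫ ω, u ω * (D ω * f₂ (Y1 ω)) ∂P :=
            integral_add (hintL f₁) (hintL f₂)
        _ = ∫ ω, u ω * ((P[D|m']) ω * (P[fun ω => f₁ (Y1 ω)|m']) ω) ∂P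
              + ∫ ω, u ω * ((P[D|m']) ω * (P[fun ω => f₂ (Y1 ω)|m']) ω) ∂P := by
            rw [ih₁, ih₂]
        _ = ∫ ω, (u ω * ((P[D|m']) ω * (P[fun ω => f₁ (Y1 ω)|m']) ω)
              + u ω * ((P[D|m']) ω * (P[fun ω => f₂ (Y1 ω)|m']) ω)) ∂P :=
            (integral_add (hcondint (hZint f₁)) (hcondint (hZint f₂))).symm
        _ = ∫ ω, u ω * ((P[D|m']) ω * (P[fun ω => (f₁ + f₂) (Y1 ω)|m']) ω) ∂P := by
            refine integral_congr_ae ?_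
            have hce : P[fun ω => (f₁ + f₂) (Y1 ω)|m']
                =ᵐ[P] P[fun ω => f₁ (Y1 ω)|m'] + P[fun ω => f₂ (Y1 ω)|m'] := by
              refine (condExp_congr_ae (Filter.Eventually.of_forall hadd)).trans ?_
              exact condExp_add (hZint f₁) (hZint f₂) m'
            filter_upwards [hce] with ω hω
            rw [hω]
            simp only [Pi.add_apply]
            ring
  -- limit step
  set sn : ℕ → SimpleFunc ℝ ℝ :=
    fun n => SimpleFunc.approxOn _root_.id measurable_id Set.univ 0 (Set.mem_univ 0) n
    with hsn
  have htend : ∀ ω, Tendsto (fun n => sn n (Y1 ω)) atTop (𝓝 (Y1 ω)) := by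
    intro ω
    simpa using SimpleFunc.tendsto_approxOn (f := (_root_.id : ℝ → ℝ)) measurable_id
      (Set.mem_univ 0) (x := Y1 ω) (by simp)
  have hZb : ∀ n ω, |sn n (Y1 ω)| ≤ |Y1 ω| + |Y1 ω| := by
    intro n ω
    simpa [Real.norm_eq_abs] using SimpleFunc.norm_approxOn_zero_le
      (f := (_root_.id : ℝ → ℝ)) measurable_id (Set.mem_univ 0) (Y1 ω) n
  have hsnint : ∀ n, Integrable (fun ω => sn n (Y1 ω)) P := fun n => hZint (sn n)
  have hL : Tendsto (fun n => ∫ ω, u ω * (D ω * sn n (Y1 ω)) ∂P) atTop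
      (𝓝 (∫ ω, u ω * (D ω * Y1 ω) ∂P)) := by
    refine tendsto_integral_of_dominated_convergence
      (bound := fun ω => Cu * (|Y1 ω| + |Y1 ω|)) (fun n => (hintL (sn n)).1)
      ((hY1int.abs.add hY1int.abs).const_mul Cu) (fun n => ?_) ?_
    · refine Filter.Eventually.of_forall fun ω => ?_
      rw [Real.norm_eq_abs, abs_mul, abs_mul]
      have h1 : |D ω| * |sn n (Y1 ω)| ≤ |Y1 ω| + |Y1 ω| := by
        nlinarith [hDabs ω, hZb n ω, abs_nonneg (D ω), abs_nonneg (sn n (Y1 ω)),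
          abs_nonneg (Y1 ω)]
      exact mul_le_mul (hubd ω) h1 (by positivity) hCu0
    · exact Filter.Eventually.of_forall fun ω =>
        ((htend ω).const_mul (D ω)).const_mul (u ω)
  have hdiff : Tendsto (fun n => ∫ ω, |sn n (Y1 ω) - Y1 ω| ∂P) atTop (𝓝 0) := by
    have := tendsto_integral_of_dominated_convergence
      (F := fun n ω => |sn n (Y1 ω) - Y1 ω|) (f := fun _ => (0:ℝ))
      (bound := fun ω => (|Y1 ω| + |Y1 ω|) + |Y1 ω|)
      (fun n => ((hsnint n).sub hY1int).abs.1)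
      ((hY1int.abs.add hY1int.abs).add hY1int.abs)
      (fun n => Filter.Eventually.of_forall fun ω => ?_)
      (Filter.Eventually.of_forall fun ω => ?_)
    · simpa using this
    · rw [Real.norm_eq_abs, abs_abs]
      have := abs_sub (sn n (Y1 ω)) (Y1 ω)
      calc |sn n (Y1 ω) - Y1 ω| ≤ |sn n (Y1 ω)| + |Y1 ω| := abs_sub _ _
        _ ≤ (|Y1 ω| + |Y1 ω|) + |Y1 ω| := by
            have := hZb n ω; linarith
    · have : Tendsto (fun n => sn n (Y1 ω) - Y1 ω) atTop (𝓝 (Y1 ω - Y1 ω)) :=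
        (htend ω).sub tendsto_const_nhds
      simpa using this.abs
  have hR : Tendsto (fun n => ∫ ω, u ω * ((P[D|m']) ω * (P[fun ω => sn n (Y1 ω)|m']) ω) ∂P)
      atTop (𝓝 (∫ ω, u ω * ((P[D|m']) ω * (P[Y1|m']) ω) ∂P)) := by
    rw [tendsto_iff_norm_sub_tendsto_zero]
    have hbd : ∀ n, ‖(∫ ω, u ω * ((P[D|m']) ω * (P[fun ω => sn n (Y1 ω)|m']) ω) ∂P)
        - ∫ ω, u ω * ((P[D|m']) ω * (P[Y1|m']) ω) ∂P‖
          ≤ Cu * ∫ ω, |sn n (Y1 ω) - Y1 ω| ∂P := by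
      intro n
      have hI1 := hcondint (hsnint n)
      have hI2 := hcondint hY1int
      rw [← integral_sub hI1 hI2, Real.norm_eq_abs]
      have habs : |∫ ω, (u ω * ((P[D|m']) ω * (P[fun ω => sn n (Y1 ω)|m']) ω)
          - u ω * ((P[D|m']) ω * (P[Y1|m']) ω)) ∂P|
            ≤ ∫ ω, |u ω * ((P[D|m']) ω * (P[fun ω => sn n (Y1 ω)|m']) ω)
              - u ω * ((P[D|m']) ω * (P[Y1|m']) ω)| ∂P := by
        simpa [Real.norm_eq_abs] using
          norm_integral_le_integral_norm (μ := P)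
            (f := fun ω => u ω * ((P[D|m']) ω * (P[fun ω => sn n (Y1 ω)|m']) ω)
              - u ω * ((P[D|m']) ω * (P[Y1|m']) ω))
      refine habs.trans ?_
      have hmono : ∫ ω, |u ω * ((P[D|m']) ω * (P[fun ω => sn n (Y1 ω)|m']) ω)
          - u ω * ((P[D|m']) ω * (P[Y1|m']) ω)| ∂P
            ≤ ∫ ω, Cu * |(P[(fun ω => sn n (Y1 ω)) - Y1|m']) ω| ∂P := by
        refine integral_mono_ae (hI1.sub hI2).abs
          (integrable_condExp.abs.const_mul Cu) ?_
        filter_upwards [hπbd, condExp_sub (μ := P) (m := m') (hsnint n) hY1int]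
          with ω h1 h2
        have : u ω * ((P[D|m']) ω * (P[fun ω => sn n (Y1 ω)|m']) ω)
            - u ω * ((P[D|m']) ω * (P[Y1|m']) ω)
              = u ω * (P[D|m']) ω * ((P[fun ω => sn n (Y1 ω)|m']) ω - (P[Y1|m']) ω) := by
          ring
        rw [this, abs_mul, abs_mul]
        have h2' : (P[fun ω => sn n (Y1 ω)|m']) ω - (P[Y1|m']) ω
            = (P[(fun ω => sn n (Y1 ω)) - Y1|m']) ω := by
          rw [h2]; simp
        rw [h2']
        have hub : |u ω| * |(P[D|m']) ω| ≤ Cu := by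
          have := hubd ω
          have h1' : |(P[D|m']) ω| ≤ 1 := by simpa using h1
          nlinarith [abs_nonneg (u ω), abs_nonneg ((P[D|m']) ω)]
        exact mul_le_mul_of_nonneg_right hub (abs_nonneg _)
      refine hmono.trans ?_
      rw [integral_const_mul]
      refine mul_le_mul_of_nonneg_left ?_ hCu0
      have := integral_abs_condExp_le (μ := P) (m := m') ((fun ω => sn n (Y1 ω)) - Y1)
      refine this.trans (le_of_eq ?_)
      refine integral_congr_ae (Filter.Eventually.of_forall fun ω => ?_)
      simp [Pi.sub_apply]
    refine squeeze_zero (fun n => norm_nonneg _) hbd ?_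
    have := hdiff.const_mul Cu
    simpa using this
  exact tendsto_nhds_unique (hL.congr fun n => key1 (sn n)) hR

lemma pull_D {Ω : Type*} {m' : MeasurableSpace Ω} [mΩ : MeasurableSpace Ω]
    {P : Measure Ω} [IsProbabilityMeasure P] (hm' : m' ≤ mΩ)
    {D : Ω → ℝ} (hDmeas : Measurable D) (hDabs : ∀ ω, |D ω| ≤ 1)
    {v : Ω → ℝ} (hvmeas : Measurable[m'] v) (hvint : Integrable v P) :
    ∫ ω, v ω * D ω ∂P = ∫ ω, v ω * (P[D|m']) ω ∂P := by
  have hDint : Integrable D P := int_bdd hDmeas.aestronglyMeasurable hDabs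
  have hvD : Integrable (v * D) P := by
    have h1 : Integrable (fun ω => D ω * v ω) P :=
      hvint.bdd_mul (c := 1) hDmeas.aestronglyMeasurable
        (Filter.Eventually.of_forall fun ω => by simpa [Real.norm_eq_abs] using hDabs ω)
    exact (h1.congr (Filter.Eventually.of_forall fun ω => by
      simp [Pi.mul_apply, mul_comm]))
  calc ∫ ω, v ω * D ω ∂P = ∫ ω, (v * D) ω ∂P := by simp [Pi.mul_apply]
    _ = ∫ ω, (P[v * D|m']) ω ∂P := (integral_condExp hm').symm
    _ = ∫ ω, (v * P[D|m']) ω ∂P := integral_congr_ae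
        (condExp_mul_of_stronglyMeasurable_left hvmeas.stronglyMeasurable hvD hDint)
    _ = ∫ ω, v ω * (P[D|m']) ω ∂P := by simp [Pi.mul_apply]

/-- Neyman orthogonality of the AIPW moment function: at the true propensity score and
true outcome regression, the Gateaux derivative of the population AIPW functional with
respect to bounded perturbations `(h, g)` of the two nuisance functions vanishes. The
function `φ` is specified by the AIPW integral formula for all `t` small enough that
`c0/2 ≤ π(x) + t·h(x) ≤ 1 − c0/2` holds for all `x`. -/
theorem stmt_13 {Ω : Type*} [MeasurableSpace Ω] [StandardBorelSpace Ω] [Nonempty Ω]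
    (P : Measure Ω) [IsProbabilityMeasure P]
    {p : ℕ} (X : Ω → (Fin p → ℝ)) (hX : Measurable X)
    (D : Ω → ℝ) (hDmeas : Measurable D) (hD : ∀ ω, D ω = 0 ∨ D ω = 1)
    (Y1 Y0 : Ω → ℝ) (hY1meas : Measurable Y1) (hY0meas : Measurable Y0)
    (hY1int : Integrable Y1 P)
    (Y : Ω → ℝ) (hY : ∀ ω, Y ω = D ω * Y1 ω + (1 - D ω) * Y0 ω)
    (hindep : ProbabilityTheory.CondIndepFun (MeasurableSpace.comap X inferInstance)
      hX.comap_le D Y1 P)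
    (π : (Fin p → ℝ) → ℝ) (hπmeas : Measurable π)
    (hπ : (fun ω => π (X ω)) =ᵐ[P] P[D | MeasurableSpace.comap X inferInstance])
    (c0 : ℝ) (hc0 : c0 ∈ Set.Ioo (0 : ℝ) (1 / 2))
    (hbound : ∀ x, c0 ≤ π x ∧ π x ≤ 1 - c0)
    (m : (Fin p → ℝ) → ℝ) (hmmeas : Measurable m)
    (hm : (fun ω => m (X ω)) =ᵐ[P] P[Y1 | MeasurableSpace.comap X inferInstance])
    (h g : (Fin p → ℝ) → ℝ) (hhmeas : Measurable h) (hgmeas : Measurable g)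
    (hhbd : ∃ Ch : ℝ, ∀ x, |h x| ≤ Ch) (hgbd : ∃ Cg : ℝ, ∀ x, |g x| ≤ Cg)
    (φ : ℝ → ℝ)
    (hφ : ∀ t : ℝ, (∀ x, c0 / 2 ≤ π x + t * h x ∧ π x + t * h x ≤ 1 - c0 / 2) →
      φ t = ∫ ω, (D ω * Y ω / (π (X ω) + t * h (X ω))
        - ((D ω - π (X ω) - t * h (X ω)) / (π (X ω) + t * h (X ω)))
          * (m (X ω) + t * g (X ω))) ∂P) :
    φ 0 = ∫ ω, Y1 ω ∂P ∧ HasDerivAt φ 0 0 := by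

  obtain ⟨Ch, hCh⟩ := hhbd
  obtain ⟨Cg, hCg⟩ := hgbd
  obtain ⟨hc0p, hc0h⟩ := hc0
  have hCh0 : 0 ≤ Ch := le_trans (abs_nonneg _) (hCh 0)
  have hCg0 : 0 ≤ Cg := le_trans (abs_nonneg _) (hCg 0)
  have hm' : MeasurableSpace.comap X inferInstance ≤ _ := hX.comap_le
  have hXm' : Measurable[MeasurableSpace.comap X inferInstance] X :=
    measurable_iff_comap_le.mpr le_rfl
  set δ : ℝ := c0 / (2 * (Ch + 1)) with hδdef
  have hδ : 0 < δ := by positivity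
  have hqb : ∀ t : ℝ, |t| ≤ δ →
      ∀ x, c0 / 2 ≤ π x + t * h x ∧ π x + t * h x ≤ 1 - c0 / 2 := by
    intro t ht x
    have h1 : |t * h x| ≤ δ * Ch := by
      rw [abs_mul]
      exact mul_le_mul ht (hCh x) (abs_nonneg _) hδ.le
    have h2 : δ * Ch ≤ c0 / 2 := by
      rw [hδdef, div_mul_eq_mul_div, div_le_div_iff₀ (by positivity) two_pos]
      nlinarith
    obtain ⟨h3, h4⟩ := abs_le.mp (h1.trans h2)
    obtain ⟨h5, h6⟩ := hbound x
    constructor <;> linarith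
  have hπabs : ∀ x, |π x| ≤ 1 := by
    intro x
    obtain ⟨h5, h6⟩ := hbound x
    rw [abs_le]; constructor <;> linarith
  have hmX : Integrable (fun ω => m (X ω)) P := integrable_condExp.congr hm.symm
  have hDabs : ∀ ω, |D ω| ≤ 1 := fun ω => by rcases hD ω with hh | hh <;> simp [hh]
  have hDY1int : Integrable (fun ω => D ω * Y1 ω) P :=
    hY1int.bdd_mul (c := 1) hDmeas.aestronglyMeasurable
      (Filter.Eventually.of_forall fun ω => by simpa [Real.norm_eq_abs] using hDabs ω)
  have hgXint : Integrable (fun ω => g (X ω)) P :=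
    int_bdd (hgmeas.comp hX).aestronglyMeasurable (fun ω => hCg (X ω))
  have hinvb : ∀ t : ℝ, |t| ≤ δ → ∀ ω : Ω,
      |1 / (π (X ω) + t * h (X ω))| ≤ 2 / c0 := by
    intro t ht ω
    have hq1 := (hqb t ht (X ω)).1
    have hqp : (0:ℝ) < π (X ω) + t * h (X ω) := lt_of_lt_of_le (by positivity) hq1
    rw [abs_of_pos (one_div_pos.mpr hqp)]
    calc 1 / (π (X ω) + t * h (X ω)) ≤ 1 / (c0 / 2) :=
          one_div_le_one_div_of_le (by positivity) hq1
      _ = 2 / c0 := one_div_div c0 2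
  have hghbd : ∀ t : ℝ, |t| ≤ δ → ∀ ω : Ω,
      |g (X ω) * h (X ω) / (π (X ω) + t * h (X ω))| ≤ Cg * Ch * (2 / c0) := by
    intro t ht ω
    rw [div_eq_mul_one_div, abs_mul]
    refine mul_le_mul ?_ (hinvb t ht ω) (abs_nonneg _) (by positivity)
    rw [abs_mul]
    exact mul_le_mul (hCg _) (hCh _) (abs_nonneg _) hCg0
  -- the value formula
  have hval : ∀ t : ℝ, |t| ≤ δ →
      φ t = (∫ ω, m (X ω) ∂P)
        + t ^ 2 * ∫ ω, g (X ω) * h (X ω) / (π (X ω) + t * h (X ω)) ∂P := by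
    intro t ht
    have hq := hqb t ht
    have hqp : ∀ x, (0:ℝ) < π x + t * h x := fun x =>
      lt_of_lt_of_le (by positivity) (hq x).1
    have hqne : ∀ x, π x + t * h x ≠ 0 := fun x => (hqp x).ne'
    have hqmeas : Measurable fun x => π x + t * h x :=
      hπmeas.add (measurable_const.mul hhmeas)
    have hufmeas : Measurable[MeasurableSpace.comap X inferInstance]
        fun ω => 1 / (π (X ω) + t * h (X ω)) :=
      measurable_const.div (hqmeas.comp hXm')
    have hub := hinvb t ht
    have hmtg : Integrable (fun ω => m (X ω) + t * g (X ω)) P :=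
      hmX.add (hgXint.const_mul t)
    have hvfmeas : Measurable[MeasurableSpace.comap X inferInstance]
        fun ω => 1 / (π (X ω) + t * h (X ω)) * (m (X ω) + t * g (X ω)) :=
      hufmeas.mul ((hmmeas.comp hXm').add (measurable_const.mul (hgmeas.comp hXm')))
    have hvfint : Integrable
        (fun ω => 1 / (π (X ω) + t * h (X ω)) * (m (X ω) + t * g (X ω))) P :=
      hmtg.bdd_mul (c := 2 / c0) (hufmeas.mono hm' le_rfl).aestronglyMeasurable
        (Filter.Eventually.of_forall fun ω => by
          rw [Real.norm_eq_abs]; exact hub ω)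
    have hpt : ∀ ω, D ω * Y ω / (π (X ω) + t * h (X ω))
        - ((D ω - π (X ω) - t * h (X ω)) / (π (X ω) + t * h (X ω)))
          * (m (X ω) + t * g (X ω))
        = 1 / (π (X ω) + t * h (X ω)) * (D ω * Y1 ω)
          - (1 / (π (X ω) + t * h (X ω)) * (m (X ω) + t * g (X ω))) * D ω
          + (m (X ω) + t * g (X ω)) := by
      intro ω
      have hne := hqne (X ω)
      have hDY : D ω * Y ω = D ω * Y1 ω := by
        rcases hD ω with hh | hh <;> simp [hY ω, hh]
      rw [hDY]
      field_simp
      ring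
    have hint1 : Integrable
        (fun ω => 1 / (π (X ω) + t * h (X ω)) * (D ω * Y1 ω)) P :=
      hDY1int.bdd_mul (c := 2 / c0) (hufmeas.mono hm' le_rfl).aestronglyMeasurable
        (Filter.Eventually.of_forall fun ω => by
          rw [Real.norm_eq_abs]; exact hub ω)
    have hint2 : Integrable
        (fun ω => (1 / (π (X ω) + t * h (X ω)) * (m (X ω) + t * g (X ω))) * D ω) P := by
      have h1 : Integrable
          (fun ω => D ω * (1 / (π (X ω) + t * h (X ω)) * (m (X ω) + t * g (X ω)))) P :=
        hvfint.bdd_mul (c := 1) hDmeas.aestronglyMeasurable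
          (Filter.Eventually.of_forall fun ω => by
            simpa [Real.norm_eq_abs] using hDabs ω)
      exact h1.congr (Filter.Eventually.of_forall fun ω => by ring)
    have hint1' : Integrable
        (fun ω => 1 / (π (X ω) + t * h (X ω)) * (π (X ω) * m (X ω))) P := by
      have h1 : Integrable
          (fun ω => (1 / (π (X ω) + t * h (X ω)) * π (X ω)) * m (X ω)) P :=
        hmX.bdd_mul (c := 2 / c0 * 1)
          (((hufmeas.mono hm' le_rfl)).mul (hπmeas.comp hX)).aestronglyMeasurable
          (Filter.Eventually.of_forall fun ω => by
            rw [Real.norm_eq_abs, abs_mul]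
            exact mul_le_mul (hub ω) (hπabs (X ω)) (abs_nonneg _) (by positivity))
      exact h1.congr (Filter.Eventually.of_forall fun ω => by ring)
    have hint2' : Integrable
        (fun ω => (1 / (π (X ω) + t * h (X ω)) * (m (X ω) + t * g (X ω))) * π (X ω)) P := by
      have h1 : Integrable
          (fun ω => π (X ω) * (1 / (π (X ω) + t * h (X ω)) * (m (X ω) + t * g (X ω)))) P :=
        hvfint.bdd_mul (c := 1) (hπmeas.comp hX).aestronglyMeasurable
          (Filter.Eventually.of_forall fun ω => by
            simpa [Real.norm_eq_abs] using hπabs (X ω))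
      exact h1.congr (Filter.Eventually.of_forall fun ω => by ring)
    have hghq : Integrable
        (fun ω => g (X ω) * h (X ω) / (π (X ω) + t * h (X ω))) P :=
      int_bdd (((hgmeas.comp hX).mul (hhmeas.comp hX)).div
        (hqmeas.comp hX)).aestronglyMeasurable (hghbd t ht)
    have e1 : ∫ ω, 1 / (π (X ω) + t * h (X ω)) * (D ω * Y1 ω) ∂P
        = ∫ ω, 1 / (π (X ω) + t * h (X ω)) * (π (X ω) * m (X ω)) ∂P := by
      rw [aipw_key hm' hDmeas hY1meas hY1int hD hindep hufmeas (Cu := 2 / c0) hub]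
      refine integral_congr_ae ?_
      filter_upwards [hπ, hm] with ω h1 h2
      rw [← h1, ← h2]
    have e2 : ∫ ω, (1 / (π (X ω) + t * h (X ω)) * (m (X ω) + t * g (X ω))) * D ω ∂P
        = ∫ ω, (1 / (π (X ω) + t * h (X ω)) * (m (X ω) + t * g (X ω))) * π (X ω) ∂P := by
      rw [pull_D hm' hDmeas hDabs hvfmeas hvfint]
      refine integral_congr_ae ?_
      filter_upwards [hπ] with ω h1
      rw [← h1]
    have hptc : ∀ ω, 1 / (π (X ω) + t * h (X ω)) * (π (X ω) * m (X ω))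
        - (1 / (π (X ω) + t * h (X ω)) * (m (X ω) + t * g (X ω))) * π (X ω)
        + (m (X ω) + t * g (X ω))
        = m (X ω) + t ^ 2 * (g (X ω) * h (X ω) / (π (X ω) + t * h (X ω))) := by
      intro ω
      have hne := hqne (X ω)
      field_simp
      ring
    rw [hφ t hq]
    calc ∫ ω, (D ω * Y ω / (π (X ω) + t * h (X ω))
          - ((D ω - π (X ω) - t * h (X ω)) / (π (X ω) + t * h (X ω)))
            * (m (X ω) + t * g (X ω))) ∂P
        = ∫ ω, (1 / (π (X ω) + t * h (X ω)) * (D ω * Y1 ω)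
            - (1 / (π (X ω) + t * h (X ω)) * (m (X ω) + t * g (X ω))) * D ω
            + (m (X ω) + t * g (X ω))) ∂P :=
          integral_congr_ae (Filter.Eventually.of_forall fun ω => hpt ω)
      _ = (∫ ω, 1 / (π (X ω) + t * h (X ω)) * (D ω * Y1 ω) ∂P)
            - (∫ ω, (1 / (π (X ω) + t * h (X ω)) * (m (X ω) + t * g (X ω))) * D ω ∂P)
            + ∫ ω, (m (X ω) + t * g (X ω)) ∂P := by
          have hint12 : Integrable (fun ω => 1 / (π (X ω) + t * h (X ω)) * (D ω * Y1 ω)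
              - (1 / (π (X ω) + t * h (X ω)) * (m (X ω) + t * g (X ω))) * D ω) P :=
            hint1.sub hint2
          rw [integral_add hint12 hmtg, integral_sub hint1 hint2]
      _ = (∫ ω, 1 / (π (X ω) + t * h (X ω)) * (π (X ω) * m (X ω)) ∂P)
            - (∫ ω, (1 / (π (X ω) + t * h (X ω)) * (m (X ω) + t * g (X ω))) * π (X ω) ∂P)
            + ∫ ω, (m (X ω) + t * g (X ω)) ∂P := by
          rw [e1, e2]
      _ = ∫ ω, (1 / (π (X ω) + t * h (X ω)) * (π (X ω) * m (X ω))
            - (1 / (π (X ω) + t * h (X ω)) * (m (X ω) + t * g (X ω))) * π (X ω)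
            + (m (X ω) + t * g (X ω))) ∂P := by
          have hint12' : Integrable (fun ω => 1 / (π (X ω) + t * h (X ω)) * (π (X ω) * m (X ω))
              - (1 / (π (X ω) + t * h (X ω)) * (m (X ω) + t * g (X ω))) * π (X ω)) P :=
            hint1'.sub hint2'
          rw [integral_add hint12' hmtg, integral_sub hint1' hint2']
      _ = ∫ ω, (m (X ω) + t ^ 2 * (g (X ω) * h (X ω) / (π (X ω) + t * h (X ω)))) ∂P :=
          integral_congr_ae (Filter.Eventually.of_forall fun ω => hptc ω)
      _ = (∫ ω, m (X ω) ∂P)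
            + t ^ 2 * ∫ ω, g (X ω) * h (X ω) / (π (X ω) + t * h (X ω)) ∂P := by
          rw [integral_add hmX (hghq.const_mul (t ^ 2)), integral_const_mul]
  have hφ0 : φ 0 = ∫ ω, m (X ω) ∂P := by
    have hh := hval 0 (by simpa using hδ.le)
    simpa using hh
  have hφ0Y : φ 0 = ∫ ω, Y1 ω ∂P := by
    rw [hφ0]
    calc ∫ ω, m (X ω) ∂P
        = ∫ ω, (P[Y1 | MeasurableSpace.comap X inferInstance]) ω ∂P :=
          integral_congr_ae hm
      _ = ∫ ω, Y1 ω ∂P := integral_condExp hm'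
  refine ⟨hφ0Y, ?_⟩
  set K : ℝ := Cg * Ch * (2 / c0) with hK
  have hK0 : 0 ≤ K := by positivity
  have hquad : ∀ t : ℝ, |t| ≤ δ → |φ t - φ 0| ≤ K * (t * t) := by
    intro t ht
    rw [hval t ht, hφ0, add_sub_cancel_left, abs_mul]
    have hIb : |∫ ω, g (X ω) * h (X ω) / (π (X ω) + t * h (X ω)) ∂P| ≤ K := by
      have := norm_integral_le_of_norm_le_const (μ := P) (C := K)
        (f := fun ω => g (X ω) * h (X ω) / (π (X ω) + t * h (X ω)))
        (Filter.Eventually.of_forall fun ω => by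
          rw [Real.norm_eq_abs]; exact hghbd t ht ω)
      simpa [Real.norm_eq_abs] using this
    calc |t ^ 2| * |∫ ω, g (X ω) * h (X ω) / (π (X ω) + t * h (X ω)) ∂P|
        ≤ |t ^ 2| * K := mul_le_mul_of_nonneg_left hIb (abs_nonneg _)
      _ = K * (t * t) := by rw [abs_of_nonneg (sq_nonneg t)]; ring
  have hev : ∀ᶠ t in 𝓝 (0:ℝ), |t| ≤ δ := by
    refine Metric.eventually_nhds_iff.mpr ⟨δ, hδ, fun x hx => ?_⟩
    rw [Real.dist_eq, sub_zero] at hx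
    exact hx.le
  have hbigO : (fun t : ℝ => φ t - φ 0 - (t - 0) • (0:ℝ)) =O[𝓝 0] fun t => t * t := by
    refine Asymptotics.isBigO_iff.mpr ⟨K, ?_⟩
    filter_upwards [hev] with t ht
    have h1 := hquad t ht
    simp only [smul_zero, sub_zero, Real.norm_eq_abs]
    calc |φ t - φ 0| ≤ K * (t * t) := h1
      _ ≤ K * |t * t| := mul_le_mul_of_nonneg_left (le_abs_self _) hK0
  have hlo : (fun t : ℝ => t * t) =o[𝓝 0] fun t => t - 0 := by
    simp only [sub_zero]
    have h1 : (fun t : ℝ => t) =o[𝓝 0] fun _ => (1:ℝ) :=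
      (Asymptotics.isLittleO_one_iff ℝ).mpr tendsto_id
    have h2 := (Asymptotics.isBigO_refl (fun t : ℝ => t) (𝓝 0)).mul_isLittleO h1
    simpa using h2
  exact hasDerivAt_iff_isLittleO.mpr (hbigO.trans_isLittleO hlo)
end
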